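/- arXiv:2404.04534 — 4 statements merged into one kernel-verified Lean document; each statement's English description precedes it below -/
import Mathlib

section
/- (Existence of equal stationary states.) Define the Markov transition kernel T on 𝒴 by T(y'|y) = q(y'|y,1) if y > 0 and T(y'|y) = q(y'|y,0) if y < 0, and let r be any stationary distribution of T. Then the state in which both groups have qualification distribution r, together with the threshold policy π(1|c,y) = 1 if y > 0 and 0 if y < 0, is a stationary state of the myopic dynamics: the threshold policy is a maximizer of J for this state, and both group distributions are unchanged at the next step. In this stationary state the selection rates of the two groups are equal. -/
/-!
Dynamic setting: `Y` is a finite set of nonzero real qualifications; groups `A`/`B`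
are encoded as `true`/`false` with weights `wA`/`wB`; `q y y' d` is the probability
of moving to qualification `y` from `y'` under decision `d`; `pA t`/`pB t` are the
group qualification distributions at time `t`, and at every step the institution
uses a myopic maximizer of the penalized objective.
-/

open Finset Filter Topology
open scoped Classical

noncomputable section

/-- A policy assigns selection probabilities in `[0,1]`. -/
def Admissible (Y : Finset ℝ) (π : Bool → ℝ → ℝ) : Prop :=
  ∀ c, ∀ y ∈ Y, 0 ≤ π c y ∧ π c y ≤ 1

/-- `g` is nondecreasing, nonnegative, convex on `[0,∞)` with `g 0 = 0`. -/
def AdmissiblePenalty (g : ℝ → ℝ) : Prop :=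
  g 0 = 0 ∧ MonotoneOn g (Set.Ici 0) ∧ ConvexOn ℝ (Set.Ici 0) g ∧
    ∀ x ∈ Set.Ici (0 : ℝ), 0 ≤ g x

/-- `r` is a probability distribution on `Y`. -/
def IsDist (Y : Finset ℝ) (r : ℝ → ℝ) : Prop :=
  (∀ y ∈ Y, 0 ≤ r y) ∧ ∑ y ∈ Y, r y = 1

/-- `q` is a Markov kernel on `Y` (for each decision `d`). -/
def IsKernel (Y : Finset ℝ) (q : ℝ → ℝ → Bool → ℝ) : Prop :=
  (∀ y ∈ Y, ∀ y' ∈ Y, ∀ d, 0 ≤ q y y' d) ∧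
    ∀ y' ∈ Y, ∀ d, (∑ y ∈ Y, q y y' d) = 1

/-- One-step update of a group distribution `r` under selection probabilities `sel`:
`p'(y) = ∑_{y'} r(y')·(sel(y')·q(y|y',1) + (1 − sel(y'))·q(y|y',0))`. -/
def stepDist (Y : Finset ℝ) (q : ℝ → ℝ → Bool → ℝ) (r sel : ℝ → ℝ) (y : ℝ) : ℝ :=
  ∑ y' ∈ Y, r y' * (sel y' * q y y' true + (1 - sel y') * q y y' false)

/-- Instantaneous utility `∑_{c,y} p(c)·p_t(y|c)·y·π(1|c,y)`. -/
def dUtil (Y : Finset ℝ) (wA wB : ℝ) (pA pB : ℝ → ℝ) (π : Bool → ℝ → ℝ) : ℝ :=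
  wA * ∑ y ∈ Y, pA y * y * π true y + wB * ∑ y ∈ Y, pB y * y * π false y

/-- Instantaneous disparity. -/
def dDisp (Y : Finset ℝ) (pA pB : ℝ → ℝ) (π : Bool → ℝ → ℝ) : ℝ :=
  |(∑ y ∈ Y, pA y * π true y) - ∑ y ∈ Y, pB y * π false y|

/-- Instantaneous penalized objective. -/
def dObj (Y : Finset ℝ) (wA wB : ℝ) (pA pB : ℝ → ℝ) (g : ℝ → ℝ) (lam : ℝ)
    (π : Bool → ℝ → ℝ) : ℝ :=
  dUtil Y wA wB pA pB π - lam * g (dDisp Y pA pB π)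

/-- `π` is a myopic optimal policy for the state `(pA, pB)`. -/
def dOptimal (Y : Finset ℝ) (wA wB : ℝ) (pA pB : ℝ → ℝ) (g : ℝ → ℝ) (lam : ℝ)
    (π : Bool → ℝ → ℝ) : Prop :=
  Admissible Y π ∧
    ∀ π', Admissible Y π' → dObj Y wA wB pA pB g lam π' ≤ dObj Y wA wB pA pB g lam π

/-- A trajectory of the myopic dynamics: at every time `t` the institution uses a
myopic optimal policy `πt t`, and the group distributions evolve accordingly. -/
def Trajectory (Y : Finset ℝ) (q : ℝ → ℝ → Bool → ℝ) (wA wB : ℝ) (g : ℝ → ℝ)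
    (lam : ℝ) (pA pB : ℕ → ℝ → ℝ) (πt : ℕ → Bool → ℝ → ℝ) : Prop :=
  ∀ t, dOptimal Y wA wB (pA t) (pB t) g lam (πt t) ∧
    (∀ y ∈ Y, pA (t + 1) y = stepDist Y q (pA t) (πt t true) y) ∧
    (∀ y ∈ Y, pB (t + 1) y = stepDist Y q (pB t) (πt t false) y)

/-- The utility-maximizing threshold selection rule. -/
def thr : ℝ → ℝ := fun y => if 0 < y then 1 else 0

/-!
The threshold rule maximizes the unpenalized utility pointwise in `y`: it selects exactly the
positive qualifications. When both groups share the distribution `r`, it has zero disparity,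
so it pays no penalty and therefore maximizes the penalized objective as well. Under the
threshold rule the update `stepDist` is one step of the kernel `T`, which fixes `r`.
-/

lemma thr_nonneg (y : ℝ) : 0 ≤ thr y := by
  unfold thr; split_ifs <;> norm_num

lemma thr_le_one (y : ℝ) : thr y ≤ 1 := by
  unfold thr; split_ifs <;> norm_num

lemma admissible_const_thr (Y : Finset ℝ) : Admissible Y (fun _ => thr) :=
  fun _ y _ => ⟨thr_nonneg y, thr_le_one y⟩

lemma mul_le_mul_thr {y s : ℝ} (hy : y ≠ 0) (hs₀ : 0 ≤ s) (hs₁ : s ≤ 1) :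
    y * s ≤ y * thr y := by
  rcases hy.lt_or_gt with hneg | hpos
  · simp only [thr, if_neg hneg.not_gt, mul_zero]
    exact mul_nonpos_of_nonpos_of_nonneg hneg.le hs₀
  · simp only [thr, if_pos hpos, mul_one]
    exact mul_le_of_le_one_right hpos.le hs₁

lemma sum_mul_le_sum_mul_thr {Y : Finset ℝ} (hY : ∀ y ∈ Y, y ≠ 0) {p sel : ℝ → ℝ}
    (hp : ∀ y ∈ Y, 0 ≤ p y) (hsel : ∀ y ∈ Y, 0 ≤ sel y ∧ sel y ≤ 1) :
    ∑ y ∈ Y, p y * y * sel y ≤ ∑ y ∈ Y, p y * y * thr y := by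
  refine sum_le_sum fun y hy => ?_
  simp only [mul_assoc]
  exact mul_le_mul_of_nonneg_left
    (mul_le_mul_thr (hY y hy) (hsel y hy).1 (hsel y hy).2) (hp y hy)

lemma dUtil_le_dUtil_thr {Y : Finset ℝ} (hY : ∀ y ∈ Y, y ≠ 0) {wA wB : ℝ}
    (hwA : 0 ≤ wA) (hwB : 0 ≤ wB) {pA pB : ℝ → ℝ}
    (hpA : ∀ y ∈ Y, 0 ≤ pA y) (hpB : ∀ y ∈ Y, 0 ≤ pB y)
    {π : Bool → ℝ → ℝ} (hπ : Admissible Y π) :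
    dUtil Y wA wB pA pB π ≤ dUtil Y wA wB pA pB (fun _ => thr) :=
  add_le_add
    (mul_le_mul_of_nonneg_left (sum_mul_le_sum_mul_thr hY hpA (hπ true)) hwA)
    (mul_le_mul_of_nonneg_left (sum_mul_le_sum_mul_thr hY hpB (hπ false)) hwB)

lemma dDisp_self_const (Y : Finset ℝ) (p sel : ℝ → ℝ) :
    dDisp Y p p (fun _ => sel) = 0 := by
  simp [dDisp]

lemma dObj_le_dUtil {Y : Finset ℝ} {wA wB : ℝ} {pA pB : ℝ → ℝ} {g : ℝ → ℝ}
    (hg : ∀ x ∈ Set.Ici (0 : ℝ), 0 ≤ g x) {lam : ℝ} (hlam : 0 ≤ lam) (π : Bool → ℝ → ℝ) :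
    dObj Y wA wB pA pB g lam π ≤ dUtil Y wA wB pA pB π :=
  sub_le_self _ (mul_nonneg hlam (hg _ (Set.mem_Ici.mpr (abs_nonneg _))))

lemma dObj_self_const {Y : Finset ℝ} {wA wB : ℝ} {p : ℝ → ℝ} {g : ℝ → ℝ} (hg : g 0 = 0)
    (lam : ℝ) (sel : ℝ → ℝ) :
    dObj Y wA wB p p g lam (fun _ => sel) = dUtil Y wA wB p p (fun _ => sel) := by
  rw [dObj, dDisp_self_const, hg, mul_zero, sub_zero]

lemma dOptimal_thr {Y : Finset ℝ} (hY : ∀ y ∈ Y, y ≠ 0) {wA wB : ℝ}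
    (hwA : 0 ≤ wA) (hwB : 0 ≤ wB) {g : ℝ → ℝ} (hg : AdmissiblePenalty g)
    {lam : ℝ} (hlam : 0 ≤ lam) {r : ℝ → ℝ} (hr : ∀ y ∈ Y, 0 ≤ r y) :
    dOptimal Y wA wB r r g lam (fun _ => thr) := by
  refine ⟨admissible_const_thr Y, fun π hπ => ?_⟩
  calc dObj Y wA wB r r g lam π
      ≤ dUtil Y wA wB r r π := dObj_le_dUtil hg.2.2.2 hlam π
    _ ≤ dUtil Y wA wB r r (fun _ => thr) := dUtil_le_dUtil_thr hY hwA hwB hr hr hπ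
    _ = dObj Y wA wB r r g lam (fun _ => thr) := (dObj_self_const hg.1 lam thr).symm

lemma stepDist_thr (Y : Finset ℝ) (q : ℝ → ℝ → Bool → ℝ) (r : ℝ → ℝ) (y : ℝ) :
    stepDist Y q r thr y =
      ∑ y' ∈ Y, r y' * (if 0 < y' then q y y' true else q y y' false) := by
  refine sum_congr rfl fun y' _ => ?_
  unfold thr
  split_ifs <;> ring

theorem stmt_14_general (Y : Finset ℝ) (hY : ∀ y ∈ Y, y ≠ 0)
    (q : ℝ → ℝ → Bool → ℝ)
    (wA wB : ℝ) (hwA : 0 < wA) (hwB : 0 < wB)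
    (g : ℝ → ℝ) (hg : AdmissiblePenalty g) (lam : ℝ) (hlam : 0 ≤ lam)
    (r : ℝ → ℝ) (hr : IsDist Y r)
    (hstat : ∀ y ∈ Y, r y =
      ∑ y' ∈ Y, r y' * (if 0 < y' then q y y' true else q y y' false)) :
    dOptimal Y wA wB r r g lam (fun _ => thr) ∧
    (∀ y ∈ Y, stepDist Y q r thr y = r y) ∧
    (∑ y ∈ Y, r y * thr y) = ∑ y ∈ Y, r y * thr y :=
  ⟨dOptimal_thr hY hwA.le hwB.le hg hlam hr.1,
    fun y hy => (stepDist_thr Y q r y).trans (hstat y hy).symm, rfl⟩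

/-- Existence of equal stationary states. Let `r` be any stationary
distribution of the kernel `T(y'|y) = q(y'|y,1)` for `y > 0` and `q(y'|y,0)` for
`y < 0`. Then the state where both groups have distribution `r`, together with the
threshold policy, is a stationary state of the myopic dynamics: the threshold policy
maximizes `J`, both group distributions are unchanged at the next step, and the two
groups have equal selection rates. -/
theorem stmt_14 (Y : Finset ℝ) (hY : ∀ y ∈ Y, y ≠ 0)
    (q : ℝ → ℝ → Bool → ℝ) (hq : IsKernel Y q)
    (wA wB : ℝ) (hwA : 0 < wA) (hwB : 0 < wB) (hw : wA + wB = 1)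
    (g : ℝ → ℝ) (hg : AdmissiblePenalty g) (lam : ℝ) (hlam : 0 ≤ lam)
    (r : ℝ → ℝ) (hr : IsDist Y r)
    (hstat : ∀ y ∈ Y, r y =
      ∑ y' ∈ Y, r y' * (if 0 < y' then q y y' true else q y y' false)) :
    dOptimal Y wA wB r r g lam (fun _ => thr) ∧
    (∀ y ∈ Y, stepDist Y q r thr y = r y) ∧
    (∑ y ∈ Y, r y * thr y) = ∑ y ∈ Y, r y * thr y :=
  stmt_14_general Y hY q wA wB hwA hwB g hg lam hlam r hr hstat
end
end

section
/- (Unique stationary state for slowly-changing qualifications.) Write 𝒴 = {y⁽¹⁾ < y⁽²⁾ < ⋯ < y⁽ⁿ⁾} (all nonzero). Assume the birth–death structure q(y⁽ⁱ⁾|y⁽ʲ⁾, d) > 0 if and only if |i − j| ≤ 1 (for both d ∈ {0,1}), and that selection helps: q(y⁽ⁱ⁺¹⁾|y⁽ⁱ⁾, 1) ≥ q(y⁽ⁱ⁺¹⁾|y⁽ⁱ⁾, 0) for all 1 ≤ i < n, and q(y⁽ⁱ⁻¹⁾|y⁽ⁱ⁾, 1) ≤ q(y⁽ⁱ⁻¹⁾|y⁽ⁱ⁾,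 0) for all 1 < i ≤ n. Then for any λ ≥ 0 and any admissible penalty g, the myopic dynamics has a unique stationary state; in this stationary state the two groups have identical qualification distributions, equal to the unique stationary distribution of the kernel T(y'|y) = q(y'|y,1) if y > 0, T(y'|y) = q(y'|y,0) if y < 0. -/
/-!
Dynamic setting indexed by `Fin n`: qualifications `yv 0 < yv 1 < ⋯ < yv (n-1)` (all
nonzero); `q j i d` is the probability of moving to qualification `yv j` from `yv i`
under decision `d`; groups `A`/`B` are `true`/`false` with weights `wA`/`wB`.
-/

open Finset Filter Topology
open scoped Classical

noncomputable section

/-- `r` is a probability distribution on `Fin n`. -/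
def IsDistF {n : ℕ} (r : Fin n → ℝ) : Prop := (∀ i, 0 ≤ r i) ∧ ∑ i, r i = 1

/-- A policy assigns selection probabilities in `[0,1]`. -/
def AdmF {n : ℕ} (π : Bool → Fin n → ℝ) : Prop := ∀ c i, 0 ≤ π c i ∧ π c i ≤ 1

/-- One-step update of a group distribution `r` under selection probabilities `sel`. -/
def stepF {n : ℕ} (q : Fin n → Fin n → Bool → ℝ) (r sel : Fin n → ℝ) (j : Fin n) : ℝ :=
  ∑ i, r i * (sel i * q j i true + (1 - sel i) * q j i false)

/-- Instantaneous penalized objective for the state `(rA, rB)`. -/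
def dObjF {n : ℕ} (yv : Fin n → ℝ) (wA wB : ℝ) (rA rB : Fin n → ℝ) (g : ℝ → ℝ)
    (lam : ℝ) (π : Bool → Fin n → ℝ) : ℝ :=
  (wA * ∑ i, rA i * yv i * π true i + wB * ∑ i, rB i * yv i * π false i) -
    lam * g (|(∑ i, rA i * π true i) - ∑ i, rB i * π false i|)

/-- A stationary state: a myopic-optimal policy whose induced update leaves both
group distributions unchanged. -/
def StatStateF {n : ℕ} (yv : Fin n → ℝ) (q : Fin n → Fin n → Bool → ℝ)
    (wA wB : ℝ) (g : ℝ → ℝ) (lam : ℝ) (rA rB : Fin n → ℝ)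
    (π : Bool → Fin n → ℝ) : Prop :=
  AdmF π ∧
    (∀ π', AdmF π' → dObjF yv wA wB rA rB g lam π' ≤ dObjF yv wA wB rA rB g lam π) ∧
    (∀ j, stepF q rA (π true) j = rA j) ∧
    (∀ j, stepF q rB (π false) j = rB j)


/-!
A stationary vector of a birth–death kernel carries no net flow across any cut `{≤ i}`, so it
satisfies detailed balance: the stationary distribution is unique, strictly positive and given
by the product formula. If one kernel moves up more easily and down less easily than another,
the likelihood ratio of their stationary laws is increasing, so the first puts more mass on
every upper set; since selection helps, a pointwise larger policy leaves more mass on `{y > 0}`.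

At a myopic optimum no admissible change may raise the utility without widening the selection
gap. Moving a group's policy towards the threshold policy `1[y > 0]`, on the positive cells,
on the others, or on both in proportions that keep its selection rate, shows that each policy
lies on one side of the threshold, that the selection rates are equal, and that one group lies
below the threshold while the other lies above it. A group below selects at most its mass on
`{y > 0}`, a group above at least its own, and the comparison of stationary laws orders these
masses; equal rates therefore force both policies to be the threshold policy, and both groups
to follow its stationary distribution.
-/

theorem sum_sum_eq_single_of_mem {α β M : Type*} [AddCommMonoid M] {s : Finset α}
    {t : Finset β} {f : α → β → M} {a : α} {b : β} (ha : a ∈ s) (hb : b ∈ t)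
    (h : ∀ x ∈ s, ∀ y ∈ t, f x y ≠ 0 → x = a ∧ y = b) :
    ∑ x ∈ s, ∑ y ∈ t, f x y = f a b := by
  rw [sum_eq_single_of_mem a ha fun x hx hxa => sum_eq_zero fun y hy =>
      not_not.1 fun hne => hxa (h x hx y hy hne).1,
    sum_eq_single_of_mem b hb fun y hy hyb => not_not.1 fun hne => hyb (h a ha y hy hne).2]

theorem IsUpperSet.sum_le_sum_of_monotone_div {ι : Type*} [Fintype ι] [LinearOrder ι]
    {u v : ι → ℝ} {S : Finset ι} (hS : IsUpperSet (S : Set ι)) (hu : ∀ i, 0 < u i)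
    (hsum : ∑ i, u i = ∑ i, v i) (hmono : Monotone fun i => v i / u i) :
    ∑ i ∈ S, u i ≤ ∑ i ∈ S, v i := by
  by_cases hall : ∀ i ∈ S, u i ≤ v i
  · exact sum_le_sum hall
  push Not at hall
  obtain ⟨i₀, hi₀, hlt⟩ := hall
  -- outside the upper set `S` every index lies below `i₀`, where the ratio is already `< 1`
  have hcompl : ∑ i ∈ Sᶜ, v i ≤ ∑ i ∈ Sᶜ, u i := sum_le_sum fun i hi => by
    have hi : i < i₀ := lt_of_not_ge fun h => mem_compl.1 hi (hS h hi₀)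
    exact ((div_lt_one (hu i)).1 ((hmono hi.le).trans_lt ((div_lt_one (hu i₀)).2 hlt))).le
  rw [← sum_add_sum_compl S u, ← sum_add_sum_compl S v] at hsum
  linarith

theorem dotProduct_lt_dotProduct_of_pos {ι : Type*} [Fintype ι] {w u v : ι → ℝ}
    (hw : ∀ i, 0 < w i) (huv : u ≤ v) (hne : u ≠ v) : w ⬝ᵥ u < w ⬝ᵥ v := by
  obtain ⟨i, hi⟩ := Function.ne_iff.1 hne
  exact sum_lt_sum (fun j _ => mul_le_mul_of_nonneg_left (huv j) (hw j).le)
    ⟨i, mem_univ i, mul_lt_mul_of_pos_left ((huv i).lt_of_ne hi) (hw i)⟩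

theorem IsDistF.dotProduct_mem_Icc {n : ℕ} {r f : Fin n → ℝ} (hr : IsDistF r)
    (hf : ∀ i, f i ∈ Set.Icc 0 1) : r ⬝ᵥ f ∈ Set.Icc 0 1 :=
  ⟨sum_nonneg fun i _ => mul_nonneg (hr.1 i) (hf i).1,
    hr.2 ▸ sum_le_sum fun i _ => mul_le_of_le_one_right (hr.1 i) (hf i).2⟩

section MarkovKernel

variable {ι : Type*} [Fintype ι]

/-- `M j i` is the probability of a step from `i` to `j`, as for `q` above. -/
def IsStationaryVec (M : ι → ι → ℝ) (r : ι → ℝ) : Prop :=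
  ∀ j, ∑ i, r i * M j i = r j

theorem IsStationaryVec.flux_balance [DecidableEq ι] {M : ι → ι → ℝ} {r : ι → ℝ}
    (hr : IsStationaryVec M r) (hM : ∀ i, ∑ j, M j i = 1) (S : Finset ι) :
    ∑ i ∈ S, ∑ j ∈ Sᶜ, r i * M j i = ∑ i ∈ Sᶜ, ∑ j ∈ S, r i * M j i := by
  have hout : ∀ i ∈ S, ∑ j ∈ S, r i * M j i + ∑ j ∈ Sᶜ, r i * M j i = r i :=
    fun i _ => by rw [sum_add_sum_compl, ← mul_sum, hM, mul_one]
  have hin : ∑ i, ∑ j ∈ S, r i * M j i = ∑ j ∈ S, r j := by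
    rw [sum_comm]; exact sum_congr rfl fun j _ => hr j
  rw [← sum_add_sum_compl S] at hin
  rw [← sum_congr rfl hout, sum_add_distrib] at hin
  linarith

end MarkovKernel

section BirthDeath

variable {n m : ℕ}

structure IsBirthDeath (M : Fin n → Fin n → ℝ) : Prop where
  nonneg : ∀ j i, 0 ≤ M j i
  sum_eq_one : ∀ i, ∑ j, M j i = 1
  pos_iff : ∀ j i, 0 < M j i ↔ |(i : ℤ) - (j : ℤ)| ≤ 1

def DetailedBalance (M : Fin (m + 1) → Fin (m + 1) → ℝ) (r : Fin (m + 1) → ℝ) : Prop :=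
  ∀ i : Fin m, r i.castSucc * M i.succ i.castSucc = r i.succ * M i.castSucc i.succ

def dbWeight (M : Fin (m + 1) → Fin (m + 1) → ℝ) : Fin (m + 1) → ℝ :=
  Fin.induction 1 fun i w => w * M i.succ i.castSucc / M i.castSucc i.succ

def stationaryDist (M : Fin (m + 1) → Fin (m + 1) → ℝ) : Fin (m + 1) → ℝ :=
  (∑ i, dbWeight M i)⁻¹ • dbWeight M

theorem dbWeight_zero (M : Fin (m + 1) → Fin (m + 1) → ℝ) : dbWeight M 0 = 1 :=
  Fin.induction_zero _ _

theorem dbWeight_succ (M : Fin (m + 1) → Fin (m + 1) → ℝ) (i : Fin m) :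
    dbWeight M i.succ = dbWeight M i.castSucc * M i.succ i.castSucc / M i.castSucc i.succ :=
  Fin.induction_succ _ _ i

namespace IsBirthDeath

theorem eq_zero {M : Fin n → Fin n → ℝ} (hM : IsBirthDeath M) {j i : Fin n}
    (h : ¬ |(i : ℤ) - (j : ℤ)| ≤ 1) : M j i = 0 :=
  le_antisymm (not_lt.1 fun hpos => h ((hM.pos_iff j i).1 hpos)) (hM.nonneg j i)

variable {M M' : Fin (m + 1) → Fin (m + 1) → ℝ} {r : Fin (m + 1) → ℝ}

theorem up_pos (hM : IsBirthDeath M) (i : Fin m) : 0 < M i.succ i.castSucc :=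
  (hM.pos_iff _ _).2 (by simp)

theorem down_pos (hM : IsBirthDeath M) (i : Fin m) : 0 < M i.castSucc i.succ :=
  (hM.pos_iff _ _).2 (by simp)

theorem eq_castSucc_succ_of_ne_zero (hM : IsBirthDeath M) {i : Fin m} {x y : Fin (m + 1)}
    (hx : x ≤ i.castSucc) (hy : i.castSucc < y) (h : M y x ≠ 0 ∨ M x y ≠ 0) :
    x = i.castSucc ∧ y = i.succ := by
  have hband : |(x : ℤ) - y| ≤ 1 := by
    rcases h with h | h
    · exact not_not.1 fun hb => h (hM.eq_zero hb)
    · exact not_not.1 fun hb => h (hM.eq_zero (by rwa [abs_sub_comm]))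
  rw [Fin.le_def, Fin.val_castSucc] at hx
  rw [Fin.lt_def, Fin.val_castSucc] at hy
  rw [abs_le] at hband
  constructor <;> ext <;> simp <;> omega

theorem detailedBalance_of_isStationaryVec (hM : IsBirthDeath M) (hr : IsStationaryVec M r) :
    DetailedBalance M r := by
  intro i
  have h := hr.flux_balance hM.sum_eq_one (Iic i.castSucc)
  rwa [sum_sum_eq_single_of_mem (a := i.castSucc) (b := i.succ) (by simp) (by simp),
    sum_sum_eq_single_of_mem (a := i.succ) (b := i.castSucc) (by simp) (by simp)] at h
  · intro x hx y hy hxy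
    simp only [mem_compl, mem_Iic, not_le] at hx hy
    exact (hM.eq_castSucc_succ_of_ne_zero hy hx (Or.inr (right_ne_zero_of_mul hxy))).symm
  · intro x hx y hy hxy
    simp only [mem_compl, mem_Iic, not_le] at hx hy
    exact hM.eq_castSucc_succ_of_ne_zero hx hy (Or.inl (right_ne_zero_of_mul hxy))

theorem isStationaryVec_of_detailedBalance (hM : IsBirthDeath M) (hr : DetailedBalance M r) :
    IsStationaryVec M r := by
  have hsymm : ∀ i j, r i * M j i = r j * M i j := by
    intro i j
    by_cases hij : |(i : ℤ) - j| ≤ 1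
    · rw [abs_le] at hij
      rcases (by omega : (j : ℕ) = i + 1 ∨ (i : ℕ) = j + 1 ∨ i = j) with h | h | rfl
      · obtain ⟨k, rfl, rfl⟩ : ∃ k : Fin m, k.castSucc = i ∧ k.succ = j :=
          ⟨⟨i, by omega⟩, rfl, Fin.ext (by simp [h])⟩
        exact hr k
      · obtain ⟨k, rfl, rfl⟩ : ∃ k : Fin m, k.castSucc = j ∧ k.succ = i :=
          ⟨⟨j, by omega⟩, rfl, Fin.ext (by simp [h])⟩
        exact (hr k).symm
      · rfl
    · rw [hM.eq_zero hij, hM.eq_zero (by rwa [abs_sub_comm]), mul_zero, mul_zero]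
  intro j
  simp_rw [hsymm _ j, ← mul_sum, hM.sum_eq_one, mul_one]

theorem dbWeight_pos (hM : IsBirthDeath M) (i : Fin (m + 1)) : 0 < dbWeight M i := by
  induction i using Fin.induction with
  | zero => simp [dbWeight_zero]
  | succ i ih => rw [dbWeight_succ]; exact div_pos (mul_pos ih (hM.up_pos i)) (hM.down_pos i)

theorem detailedBalance_dbWeight (hM : IsBirthDeath M) : DetailedBalance M (dbWeight M) :=
  fun i => by rw [dbWeight_succ, div_mul_cancel₀ _ (hM.down_pos i).ne']

theorem eq_smul_dbWeight (hM : IsBirthDeath M) (hr : DetailedBalance M r) :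
    r = r 0 • dbWeight M := by
  funext i
  induction i using Fin.induction with
  | zero => simp [dbWeight_zero]
  | succ i ih =>
    simp only [Pi.smul_apply, smul_eq_mul] at ih ⊢
    rw [dbWeight_succ, ← mul_div_assoc, ← mul_assoc, ← ih, eq_div_iff (hM.down_pos i).ne']
    exact (hr i).symm

theorem stationaryDist_pos (hM : IsBirthDeath M) (i : Fin (m + 1)) :
    0 < stationaryDist M i :=
  mul_pos (inv_pos.2 (sum_pos (fun j _ => hM.dbWeight_pos j) univ_nonempty)) (hM.dbWeight_pos i)

theorem sum_stationaryDist (hM : IsBirthDeath M) : ∑ i, stationaryDist M i = 1 := by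
  simp only [stationaryDist, Pi.smul_apply, smul_eq_mul, ← mul_sum]
  exact inv_mul_cancel₀ (sum_pos (fun j _ => hM.dbWeight_pos j) univ_nonempty).ne'

theorem isDistF_stationaryDist (hM : IsBirthDeath M) : IsDistF (stationaryDist M) :=
  ⟨fun i => (hM.stationaryDist_pos i).le, hM.sum_stationaryDist⟩

theorem isStationaryVec_stationaryDist (hM : IsBirthDeath M) :
    IsStationaryVec M (stationaryDist M) :=
  hM.isStationaryVec_of_detailedBalance fun i => by
    simp only [stationaryDist, Pi.smul_apply, smul_eq_mul, mul_assoc,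
      hM.detailedBalance_dbWeight i]

theorem eq_stationaryDist (hM : IsBirthDeath M) (hr : IsStationaryVec M r)
    (hr1 : ∑ i, r i = 1) : r = stationaryDist M := by
  have h := hM.eq_smul_dbWeight (hM.detailedBalance_of_isStationaryVec hr)
  have h0 : r 0 = (∑ i, dbWeight M i)⁻¹ := by
    rw [h] at hr1
    simp only [Pi.smul_apply, smul_eq_mul, ← mul_sum] at hr1
    exact eq_inv_of_mul_eq_one_left hr1
  rw [h, h0, stationaryDist]

theorem pos_of_isStationaryVec (hM : IsBirthDeath M) (hr : IsStationaryVec M r)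
    (hr1 : ∑ i, r i = 1) (i : Fin (m + 1)) : 0 < r i :=
  hM.eq_stationaryDist hr hr1 ▸ hM.stationaryDist_pos i

theorem sum_stationaryDist_le (hM : IsBirthDeath M) (hM' : IsBirthDeath M')
    (hup : ∀ i : Fin m, M i.succ i.castSucc ≤ M' i.succ i.castSucc)
    (hdown : ∀ i : Fin m, M' i.castSucc i.succ ≤ M i.castSucc i.succ)
    {S : Finset (Fin (m + 1))} (hS : IsUpperSet (S : Set (Fin (m + 1)))) :
    ∑ i ∈ S, stationaryDist M i ≤ ∑ i ∈ S, stationaryDist M' i := by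
  have hratio : Monotone fun i => dbWeight M' i / dbWeight M i := by
    refine Fin.monotone_iff_le_succ.2 fun i => ?_
    have hw := hM.dbWeight_pos i.castSucc
    have hw' := hM'.dbWeight_pos i.castSucc
    have hstep : M i.succ i.castSucc / M i.castSucc i.succ
        ≤ M' i.succ i.castSucc / M' i.castSucc i.succ :=
      div_le_div₀ (hM'.nonneg _ _) (hup i) (hM'.down_pos i) (hdown i)
    rw [dbWeight_succ, dbWeight_succ, div_le_div_iff₀ hw (by
      exact div_pos (mul_pos hw (hM.up_pos i)) (hM.down_pos i))]
    calc dbWeight M' i.castSucc * (dbWeight M i.castSucc * M i.succ i.castSucc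
            / M i.castSucc i.succ)
        = dbWeight M' i.castSucc * dbWeight M i.castSucc
            * (M i.succ i.castSucc / M i.castSucc i.succ) := by ring
      _ ≤ dbWeight M' i.castSucc * dbWeight M i.castSucc
            * (M' i.succ i.castSucc / M' i.castSucc i.succ) := by gcongr
      _ = _ := by ring
  refine hS.sum_le_sum_of_monotone_div hM.stationaryDist_pos
    (by rw [hM.sum_stationaryDist, hM'.sum_stationaryDist]) ?_
  simp only [stationaryDist, Pi.smul_apply, smul_eq_mul, mul_div_mul_comm]
  exact hratio.const_mul (div_nonneg (inv_nonneg.2 (sum_nonneg fun j _ => (hM'.dbWeight_pos j).le))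
    (inv_nonneg.2 (sum_nonneg fun j _ => (hM.dbWeight_pos j).le)))

end IsBirthDeath

end BirthDeath

section Policy

variable {n : ℕ}

def polKernel (q : Fin n → Fin n → Bool → ℝ) (p : Fin n → ℝ) (j i : Fin n) : ℝ :=
  p i * q j i true + (1 - p i) * q j i false

theorem polKernel_sub_polKernel (q : Fin n → Fin n → Bool → ℝ) (p p' : Fin n → ℝ)
    (j i : Fin n) :
    polKernel q p' j i - polKernel q p j i = (p' i - p i) * (q j i true - q j i false) := by
  unfold polKernel; ring

theorem isBirthDeath_polKernel {q : Fin n → Fin n → Bool → ℝ}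
    (hq : ∀ d, IsBirthDeath fun j i => q j i d) {p : Fin n → ℝ}
    (hp : ∀ i, 0 ≤ p i ∧ p i ≤ 1) : IsBirthDeath (polKernel q p) where
  nonneg j i := add_nonneg (mul_nonneg (hp i).1 ((hq true).nonneg j i))
    (mul_nonneg (sub_nonneg.2 (hp i).2) ((hq false).nonneg j i))
  sum_eq_one i := by
    have h1 := (hq true).sum_eq_one i
    have h0 := (hq false).sum_eq_one i
    simp only [polKernel, sum_add_distrib, ← mul_sum, h1, h0]
    ring
  pos_iff j i := by
    constructor
    · intro h
      by_contra hb
      rw [polKernel, (hq true).eq_zero hb, (hq false).eq_zero hb] at h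
      simp at h
    · intro hb
      have h1 := ((hq true).pos_iff j i).2 hb
      have h0 := ((hq false).pos_iff j i).2 hb
      rcases (hp i).1.eq_or_lt with h | h
      · simpa [polKernel, ← h] using h0
      · exact add_pos_of_pos_of_nonneg (mul_pos h h1)
          (mul_nonneg (sub_nonneg.2 (hp i).2) h0.le)

def threshold (yv : Fin n → ℝ) : Fin n → ℝ := fun i => if 0 < yv i then 1 else 0

def slack (yv p : Fin n → ℝ) : Fin n → ℝ := fun i => if 0 < yv i then 1 - p i else 0

def excess (yv p : Fin n → ℝ) : Fin n → ℝ := fun i => if 0 < yv i then 0 else p i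

def nudge (yv : Fin n → ℝ) (a b : ℝ) (p : Fin n → ℝ) : Fin n → ℝ :=
  p + a • slack yv p - b • excess yv p

variable {yv p : Fin n → ℝ}

theorem threshold_mem_Icc (yv : Fin n → ℝ) (i : Fin n) : threshold yv i ∈ Set.Icc 0 1 := by
  unfold threshold; split_ifs <;> norm_num

theorem polKernel_threshold (q : Fin n → Fin n → Bool → ℝ) (j i : Fin n) :
    polKernel q (threshold yv) j i = if 0 < yv i then q j i true else q j i false := by
  unfold polKernel threshold; split_ifs <;> ring

theorem slack_mem_Icc (hp : ∀ i, 0 ≤ p i ∧ p i ≤ 1) (i : Fin n) :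
    slack yv p i ∈ Set.Icc 0 1 := by
  have := hp i
  unfold slack; split_ifs <;> constructor <;> linarith

theorem excess_mem_Icc (hp : ∀ i, 0 ≤ p i ∧ p i ≤ 1) (i : Fin n) :
    excess yv p i ∈ Set.Icc 0 1 := by
  have := hp i
  unfold excess; split_ifs <;> constructor <;> linarith

theorem nudge_mem_Icc (hp : ∀ i, 0 ≤ p i ∧ p i ≤ 1) {a b : ℝ} (ha : a ∈ Set.Icc 0 1)
    (hb : b ∈ Set.Icc 0 1) (i : Fin n) : nudge yv a b p i ∈ Set.Icc 0 1 := by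
  obtain ⟨hp0, hp1⟩ := hp i
  obtain ⟨ha0, ha1⟩ := ha
  obtain ⟨hb0, hb1⟩ := hb
  simp only [nudge, slack, excess, Pi.add_apply, Pi.sub_apply, Pi.smul_apply, smul_eq_mul]
  split_ifs <;> constructor <;> nlinarith

theorem dotProduct_nudge (w : Fin n → ℝ) (a b : ℝ) :
    w ⬝ᵥ nudge yv a b p = w ⬝ᵥ p + a * w ⬝ᵥ slack yv p - b * w ⬝ᵥ excess yv p := by
  simp only [nudge, dotProduct_sub, dotProduct_add, dotProduct_smul, smul_eq_mul]

theorem slack_pos_of_not_threshold_le {r : Fin n → ℝ} (hr : ∀ i, 0 < r i)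
    (hp : ∀ i, 0 ≤ p i ∧ p i ≤ 1) (h : ¬ threshold yv ≤ p) :
    0 < r ⬝ᵥ slack yv p ∧ 0 < (r * yv) ⬝ᵥ slack yv p := by
  simp only [Pi.le_def, not_forall, not_le] at h
  obtain ⟨i, hi⟩ := h
  have hyi : 0 < yv i := by
    by_contra hy
    simp only [threshold, hy, if_false] at hi
    exact (hp i).1.not_gt hi
  have hsi : 0 < slack yv p i := by simp only [threshold, slack, hyi, if_true] at hi ⊢; linarith
  have hterm : ∀ j, 0 ≤ (r * yv) j * slack yv p j := fun j => by
    simp only [slack, Pi.mul_apply]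
    split_ifs with hy
    · exact mul_nonneg (mul_pos (hr j) hy).le (by linarith [(hp j).2])
    · rw [mul_zero]
  exact ⟨sum_pos' (fun j _ => mul_nonneg (hr j).le (slack_mem_Icc hp j).1)
      ⟨i, mem_univ i, mul_pos (hr i) hsi⟩,
    sum_pos' (fun j _ => hterm j) ⟨i, mem_univ i, mul_pos (mul_pos (hr i) hyi) hsi⟩⟩

theorem excess_pos_of_not_le_threshold {r : Fin n → ℝ} (hr : ∀ i, 0 < r i)
    (hnz : ∀ i, yv i ≠ 0) (hp : ∀ i, 0 ≤ p i ∧ p i ≤ 1) (h : ¬ p ≤ threshold yv) :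
    0 < r ⬝ᵥ excess yv p ∧ (r * yv) ⬝ᵥ excess yv p < 0 := by
  simp only [Pi.le_def, not_forall, not_le] at h
  obtain ⟨i, hi⟩ := h
  have hyi : yv i < 0 := by
    refine lt_of_le_of_ne (not_lt.1 fun hy => ?_) (hnz i)
    simp only [threshold, hy, if_true] at hi
    exact (hp i).2.not_gt hi
  have hei : 0 < excess yv p i := by
    simp only [threshold, excess, hyi.not_gt, if_false] at hi ⊢; exact hi
  have hterm : ∀ j, (r * yv) j * excess yv p j ≤ 0 := fun j => by
    simp only [excess, Pi.mul_apply]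
    split_ifs with hy
    · rw [mul_zero]
    · exact mul_nonpos_of_nonpos_of_nonneg
        (mul_nonpos_of_nonneg_of_nonpos (hr j).le (not_lt.1 hy)) (hp j).1
  exact ⟨sum_pos' (fun j _ => mul_nonneg (hr j).le (excess_mem_Icc hp j).1)
      ⟨i, mem_univ i, mul_pos (hr i) hei⟩,
    sum_neg' (fun j _ => hterm j)
      ⟨i, mem_univ i, mul_neg_of_neg_of_pos (mul_neg_of_pos_of_neg (hr i) hyi) hei⟩⟩

theorem dotProduct_threshold (r : Fin n → ℝ) :
    r ⬝ᵥ threshold yv = ∑ i ∈ univ.filter fun i => 0 < yv i, r i := by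
  simp [dotProduct, threshold, sum_filter]

theorem isUpperSet_filter_pos (hmono : Monotone yv) :
    IsUpperSet ((univ.filter fun i => 0 < yv i : Finset (Fin n)) : Set (Fin n)) := by
  intro i j hij hi
  simp only [coe_filter, mem_univ, true_and, Set.mem_ofPred_eq] at hi ⊢
  exact hi.trans_le (hmono hij)

theorem mul_dotProduct_le_threshold {r : Fin n → ℝ} (hr : ∀ i, 0 ≤ r i)
    (hp : ∀ i, 0 ≤ p i ∧ p i ≤ 1) : (r * yv) ⬝ᵥ p ≤ (r * yv) ⬝ᵥ threshold yv := by
  refine sum_le_sum fun i _ => ?_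
  simp only [Pi.mul_apply, threshold]
  split_ifs with h
  · rw [mul_one]; exact mul_le_of_le_one_right (mul_nonneg (hr i) h.le) (hp i).2
  · rw [mul_zero]
    exact mul_nonpos_of_nonpos_of_nonneg
      (mul_nonpos_of_nonneg_of_nonpos (hr i) (not_lt.1 h)) (hp i).1

end Policy

section Optimality

variable {n : ℕ} {yv : Fin n → ℝ} {wA wB lam : ℝ} {rA rB : Fin n → ℝ} {g : ℝ → ℝ}
  {π : Bool → Fin n → ℝ}

def utility (yv : Fin n → ℝ) (wA wB : ℝ) (rA rB : Fin n → ℝ)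
    (π : Bool → Fin n → ℝ) : ℝ :=
  wA * (rA * yv) ⬝ᵥ π true + wB * (rB * yv) ⬝ᵥ π false

def selectionGap (rA rB : Fin n → ℝ) (π : Bool → Fin n → ℝ) : ℝ :=
  rA ⬝ᵥ π true - rB ⬝ᵥ π false

theorem dObjF_eq (yv : Fin n → ℝ) (wA wB : ℝ) (rA rB : Fin n → ℝ) (g : ℝ → ℝ)
    (lam : ℝ) (π : Bool → Fin n → ℝ) :
    dObjF yv wA wB rA rB g lam π = utility yv wA wB rA rB π - lam * g |selectionGap rA rB π| :=
  rfl

theorem selectionGap_swap (rA rB : Fin n → ℝ) (π : Bool → Fin n → ℝ) :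
    selectionGap rB rA (fun c => π !c) = -selectionGap rA rB π := by
  simp only [selectionGap, Bool.not_true, Bool.not_false]; ring

def IsMyopicOptimal (yv : Fin n → ℝ) (wA wB : ℝ) (rA rB : Fin n → ℝ) (g : ℝ → ℝ)
    (lam : ℝ) (π : Bool → Fin n → ℝ) : Prop :=
  AdmF π ∧ ∀ π', AdmF π' → dObjF yv wA wB rA rB g lam π' ≤ dObjF yv wA wB rA rB g lam π

namespace IsMyopicOptimal

theorem swap (h : IsMyopicOptimal yv wA wB rA rB g lam π) :
    IsMyopicOptimal yv wB wA rB rA g lam fun c => π !c := by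
  refine ⟨fun c => h.1 !c, fun π' hπ' => ?_⟩
  have := h.2 (fun c => π' !c) fun c => hπ' !c
  simp only [dObjF, Bool.not_true, Bool.not_false] at this ⊢
  rw [abs_sub_comm (∑ i, rB i * π' true i), abs_sub_comm (∑ i, rB i * π false i)]
  linarith

theorem not_improvable (h : IsMyopicOptimal yv wA wB rA rB g lam π)
    (hg : MonotoneOn g (Set.Ici 0)) (hlam : 0 ≤ lam) {π' : Bool → Fin n → ℝ}
    (hπ' : AdmF π') (hU : utility yv wA wB rA rB π < utility yv wA wB rA rB π')
    (hgap : |selectionGap rA rB π'| ≤ |selectionGap rA rB π|) : False := by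
  have hpen := mul_le_mul_of_nonneg_left
    (hg (Set.mem_Ici.2 (abs_nonneg _)) (Set.mem_Ici.2 (abs_nonneg _)) hgap) hlam
  have := h.2 π' hπ'
  rw [dObjF_eq, dObjF_eq] at this
  linarith

theorem not_nudge_improvable (h : IsMyopicOptimal yv wA wB rA rB g lam π)
    (hg : MonotoneOn g (Set.Ici 0)) (hlam : 0 ≤ lam) {aA bA aB bB : ℝ}
    (haA : aA ∈ Set.Icc 0 1) (hbA : bA ∈ Set.Icc 0 1) (haB : aB ∈ Set.Icc 0 1)
    (hbB : bB ∈ Set.Icc 0 1)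
    (hU : 0 <
      wA * (aA * (rA * yv) ⬝ᵥ slack yv (π true) - bA * (rA * yv) ⬝ᵥ excess yv (π true)) +
      wB * (aB * (rB * yv) ⬝ᵥ slack yv (π false) - bB * (rB * yv) ⬝ᵥ excess yv (π false)))
    (hgap : |selectionGap rA rB π
      + (aA * rA ⬝ᵥ slack yv (π true) - bA * rA ⬝ᵥ excess yv (π true))
      - (aB * rB ⬝ᵥ slack yv (π false) - bB * rB ⬝ᵥ excess yv (π false))|
      ≤ |selectionGap rA rB π|) : False := by
  refine h.not_improvable hg hlam
    (π' := fun c => bif c then nudge yv aA bA (π true) else nudge yv aB bB (π false)) ?_ ?_ ?_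
  · rintro (_ | _)
    · exact nudge_mem_Icc (h.1 false) haB hbB
    · exact nudge_mem_Icc (h.1 true) haA hbA
  · simp only [utility, cond_true, cond_false, dotProduct_nudge]
    linarith
  · convert hgap using 2
    simp only [selectionGap, cond_true, cond_false, dotProduct_nudge]
    ring

theorem threshold_le_or_le_threshold (h : IsMyopicOptimal yv wA wB rA rB g lam π)
    (hg : MonotoneOn g (Set.Ici 0)) (hlam : 0 ≤ lam) (hwA : 0 < wA) (hdA : IsDistF rA)
    (hposA : ∀ i, 0 < rA i) (hnz : ∀ i, yv i ≠ 0) :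
    threshold yv ≤ π true ∨ π true ≤ threshold yv := by
  by_contra! hcon
  obtain ⟨hX, hGU⟩ := slack_pos_of_not_threshold_le hposA (h.1 true) hcon.1
  obtain ⟨hY, hGD⟩ := excess_pos_of_not_le_threshold hposA hnz (h.1 true) hcon.2
  -- trade slack against excess so that the selection rate of `A` stays put
  refine h.not_nudge_improvable hg hlam (aA := rA ⬝ᵥ excess yv (π true))
    (bA := rA ⬝ᵥ slack yv (π true)) (hdA.dotProduct_mem_Icc (excess_mem_Icc (h.1 true)))
    (hdA.dotProduct_mem_Icc (slack_mem_Icc (h.1 true))) unitInterval.zero_mem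
    unitInterval.zero_mem
    ?_ (le_of_eq (by congr 1; ring))
  simp only [zero_mul, sub_zero, mul_zero, add_zero]
  exact mul_pos hwA (sub_pos.2 ((mul_neg_of_pos_of_neg hX hGD).trans (mul_pos hY hGU)))

theorem threshold_le_or_threshold_le (h : IsMyopicOptimal yv wA wB rA rB g lam π)
    (hg : MonotoneOn g (Set.Ici 0)) (hlam : 0 ≤ lam) (hwA : 0 < wA) (hwB : 0 < wB)
    (hdA : IsDistF rA) (hdB : IsDistF rB) (hposA : ∀ i, 0 < rA i) (hposB : ∀ i, 0 < rB i) :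
    threshold yv ≤ π true ∨ threshold yv ≤ π false := by
  by_contra! hcon
  obtain ⟨hXA, hGA⟩ := slack_pos_of_not_threshold_le hposA (h.1 true) hcon.1
  obtain ⟨hXB, hGB⟩ := slack_pos_of_not_threshold_le hposB (h.1 false) hcon.2
  refine h.not_nudge_improvable hg hlam (aA := rB ⬝ᵥ slack yv (π false))
    (aB := rA ⬝ᵥ slack yv (π true)) (bA := 0) (bB := 0)
    (hdB.dotProduct_mem_Icc (slack_mem_Icc (h.1 false))) unitInterval.zero_mem
    (hdA.dotProduct_mem_Icc (slack_mem_Icc (h.1 true))) unitInterval.zero_mem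
    ?_ (le_of_eq (by congr 1; ring))
  simp only [zero_mul, sub_zero]
  exact add_pos (mul_pos hwA (mul_pos hXB hGA)) (mul_pos hwB (mul_pos hXA hGB))

theorem le_threshold_or_le_threshold (h : IsMyopicOptimal yv wA wB rA rB g lam π)
    (hg : MonotoneOn g (Set.Ici 0)) (hlam : 0 ≤ lam) (hwA : 0 < wA) (hwB : 0 < wB)
    (hdA : IsDistF rA) (hdB : IsDistF rB) (hposA : ∀ i, 0 < rA i) (hposB : ∀ i, 0 < rB i)
    (hnz : ∀ i, yv i ≠ 0) :
    π true ≤ threshold yv ∨ π false ≤ threshold yv := by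
  by_contra! hcon
  obtain ⟨hYA, hGA⟩ := excess_pos_of_not_le_threshold hposA hnz (h.1 true) hcon.1
  obtain ⟨hYB, hGB⟩ := excess_pos_of_not_le_threshold hposB hnz (h.1 false) hcon.2
  refine h.not_nudge_improvable hg hlam (bA := rB ⬝ᵥ excess yv (π false))
    (bB := rA ⬝ᵥ excess yv (π true)) (aA := 0) (aB := 0)
    unitInterval.zero_mem (hdB.dotProduct_mem_Icc (excess_mem_Icc (h.1 false)))
    unitInterval.zero_mem (hdA.dotProduct_mem_Icc (excess_mem_Icc (h.1 true)))
    ?_ (le_of_eq (by congr 1; ring))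
  linarith [mul_pos hwA (mul_pos hYB (neg_pos.2 hGA)),
    mul_pos hwB (mul_pos hYA (neg_pos.2 hGB))]

theorem threshold_le_of_selectionGap_neg (h : IsMyopicOptimal yv wA wB rA rB g lam π)
    (hg : MonotoneOn g (Set.Ici 0)) (hlam : 0 ≤ lam) (hwA : 0 < wA) (hdA : IsDistF rA)
    (hposA : ∀ i, 0 < rA i) (hneg : selectionGap rA rB π < 0) : threshold yv ≤ π true := by
  by_contra hcon
  obtain ⟨hX, hGU⟩ := slack_pos_of_not_threshold_le hposA (h.1 true) hcon
  have hX1 := (hdA.dotProduct_mem_Icc (slack_mem_Icc (yv := yv) (h.1 true))).2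
  set a := min 1 (-selectionGap rA rB π)
  have ha : 0 < a := lt_min one_pos (neg_pos.2 hneg)
  -- a step of size at most the gap cannot overshoot
  have hstep : a * rA ⬝ᵥ slack yv (π true) ≤ -selectionGap rA rB π :=
    (mul_le_of_le_one_right ha.le hX1).trans (min_le_right _ _)
  refine h.not_nudge_improvable hg hlam (aA := a) (bA := 0) (aB := 0) (bB := 0)
    ⟨ha.le, min_le_left _ _⟩ unitInterval.zero_mem unitInterval.zero_mem
    unitInterval.zero_mem
    ?_ ?_
  · simp only [zero_mul, sub_zero, mul_zero, add_zero]
    exact mul_pos hwA (mul_pos ha hGU)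
  · simp only [zero_mul, sub_zero]
    rw [abs_of_nonpos (by linarith), abs_of_neg hneg]
    nlinarith

theorem le_threshold_of_selectionGap_pos (h : IsMyopicOptimal yv wA wB rA rB g lam π)
    (hg : MonotoneOn g (Set.Ici 0)) (hlam : 0 ≤ lam) (hwA : 0 < wA) (hdA : IsDistF rA)
    (hposA : ∀ i, 0 < rA i) (hnz : ∀ i, yv i ≠ 0) (hpos : 0 < selectionGap rA rB π) :
    π true ≤ threshold yv := by
  by_contra hcon
  obtain ⟨hY, hGD⟩ := excess_pos_of_not_le_threshold hposA hnz (h.1 true) hcon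
  have hY1 := (hdA.dotProduct_mem_Icc (excess_mem_Icc (yv := yv) (h.1 true))).2
  set b := min 1 (selectionGap rA rB π)
  have hb : 0 < b := lt_min one_pos hpos
  have hstep : b * rA ⬝ᵥ excess yv (π true) ≤ selectionGap rA rB π :=
    (mul_le_of_le_one_right hb.le hY1).trans (min_le_right _ _)
  refine h.not_nudge_improvable hg hlam (aA := 0) (bA := b) (aB := 0) (bB := 0)
    unitInterval.zero_mem ⟨hb.le, min_le_left _ _⟩ unitInterval.zero_mem
    unitInterval.zero_mem
    ?_ ?_
  · linarith [mul_pos hwA (mul_pos hb (neg_pos.2 hGD))]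
  · simp only [zero_mul, zero_sub, sub_zero]
    rw [abs_of_nonneg (by nlinarith), abs_of_pos hpos]
    nlinarith

end IsMyopicOptimal

end Optimality

section StationaryState

variable {m : ℕ} {yv : Fin (m + 1) → ℝ} {q : Fin (m + 1) → Fin (m + 1) → Bool → ℝ}

theorem dotProduct_le_of_le_threshold_le (hmono : Monotone yv)
    (hq : ∀ d, IsBirthDeath fun j i => q j i d)
    (hhelp : ∀ i : Fin m, q i.succ i.castSucc false ≤ q i.succ i.castSucc true ∧
      q i.castSucc i.succ true ≤ q i.castSucc i.succ false)
    {p p' r r' : Fin (m + 1) → ℝ} (hp : ∀ i, 0 ≤ p i ∧ p i ≤ 1)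
    (hp' : ∀ i, 0 ≤ p' i ∧ p' i ≤ 1)
    (hr : IsStationaryVec (polKernel q p) r) (hr1 : ∑ i, r i = 1)
    (hr' : IsStationaryVec (polKernel q p') r') (hr'1 : ∑ i, r' i = 1)
    (hpt : p ≤ threshold yv) (htp : threshold yv ≤ p') :
    r ⬝ᵥ p ≤ r' ⬝ᵥ p' ∧
      (r ⬝ᵥ p = r' ⬝ᵥ p' → p = threshold yv ∧ p' = threshold yv) := by
  have hK := isBirthDeath_polKernel hq hp
  have hK' := isBirthDeath_polKernel hq hp'
  obtain rfl := hK.eq_stationaryDist hr hr1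
  obtain rfl := hK'.eq_stationaryDist hr' hr'1
  have hpp' : p ≤ p' := hpt.trans htp
  have hmid : stationaryDist (polKernel q p) ⬝ᵥ threshold yv
      ≤ stationaryDist (polKernel q p') ⬝ᵥ threshold yv := by
    rw [dotProduct_threshold, dotProduct_threshold]
    refine hK.sum_stationaryDist_le hK' (fun i => ?_) (fun i => ?_)
      (isUpperSet_filter_pos hmono)
    · have := polKernel_sub_polKernel q p p' i.succ i.castSucc
      nlinarith [mul_nonneg (sub_nonneg.2 (hpp' i.castSucc)) (sub_nonneg.2 (hhelp i).1)]
    · have := polKernel_sub_polKernel q p p' i.castSucc i.succ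
      nlinarith [mul_nonneg (sub_nonneg.2 (hpp' i.succ)) (sub_nonneg.2 (hhelp i).2)]
  have hlo := dotProduct_le_dotProduct_of_nonneg_left hpt fun i => (hK.stationaryDist_pos i).le
  have hhi := dotProduct_le_dotProduct_of_nonneg_left htp fun i => (hK'.stationaryDist_pos i).le
  refine ⟨hlo.trans (hmid.trans hhi), fun heq => ⟨?_, ?_⟩⟩
  · by_contra hne
    linarith [dotProduct_lt_dotProduct_of_pos hK.stationaryDist_pos hpt hne]
  · by_contra hne
    linarith [dotProduct_lt_dotProduct_of_pos hK'.stationaryDist_pos htp (Ne.symm hne)]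

theorem StatStateF.policy_eq_threshold {wA wB lam : ℝ} {g : ℝ → ℝ}
    {rA rB : Fin (m + 1) → ℝ} {π : Bool → Fin (m + 1) → ℝ}
    (hss : StatStateF yv q wA wB g lam rA rB π) (hmono : Monotone yv) (hnz : ∀ i, yv i ≠ 0)
    (hq : ∀ d, IsBirthDeath fun j i => q j i d)
    (hhelp : ∀ i : Fin m, q i.succ i.castSucc false ≤ q i.succ i.castSucc true ∧
      q i.castSucc i.succ true ≤ q i.castSucc i.succ false)
    (hwA : 0 < wA) (hwB : 0 < wB) (hg : MonotoneOn g (Set.Ici 0)) (hlam : 0 ≤ lam)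
    (hdA : IsDistF rA) (hdB : IsDistF rB) :
    π true = threshold yv ∧ π false = threshold yv := by
  obtain ⟨hadm, hopt, hstA, hstB⟩ := hss
  have h : IsMyopicOptimal yv wA wB rA rB g lam π := ⟨hadm, hopt⟩
  have hposA := (isBirthDeath_polKernel hq (hadm true)).pos_of_isStationaryVec hstA hdA.2
  have hposB := (isBirthDeath_polKernel hq (hadm false)).pos_of_isStationaryVec hstB hdB.2
  have hAB := dotProduct_le_of_le_threshold_le hmono hq hhelp (hadm true) (hadm false)
    hstA hdA.2 hstB hdB.2
  have hBA := dotProduct_le_of_le_threshold_le hmono hq hhelp (hadm false) (hadm true)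
    hstB hdB.2 hstA hdA.2
  have hgap : rA ⬝ᵥ π true = rB ⬝ᵥ π false := by
    rcases lt_trichotomy (selectionGap rA rB π) 0 with hlt | heq | hgt
    · have hA := h.threshold_le_of_selectionGap_neg hg hlam hwA hdA hposA hlt
      have hB : π false ≤ threshold yv := h.swap.le_threshold_of_selectionGap_pos hg hlam hwB
        hdB hposB hnz (by rw [selectionGap_swap]; linarith)
      linarith [(hBA hB hA).1, show rA ⬝ᵥ π true - rB ⬝ᵥ π false < 0 from hlt]
    · exact sub_eq_zero.1 heq
    · have hA := h.le_threshold_of_selectionGap_pos hg hlam hwA hdA hposA hnz hgt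
      have hB : threshold yv ≤ π false := h.swap.threshold_le_of_selectionGap_neg hg hlam hwB
        hdB hposB (by rw [selectionGap_swap]; linarith)
      linarith [(hAB hA hB).1, show 0 < rA ⬝ᵥ π true - rB ⬝ᵥ π false from hgt]
  have hA := h.threshold_le_or_le_threshold hg hlam hwA hdA hposA hnz
  have hB : threshold yv ≤ π false ∨ π false ≤ threshold yv :=
    h.swap.threshold_le_or_le_threshold hg hlam hwB hdB hposB hnz
  have hup := h.threshold_le_or_threshold_le hg hlam hwA hwB hdA hdB hposA hposB
  have hdown := h.le_threshold_or_le_threshold hg hlam hwA hwB hdA hdB hposA hposB hnz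
  rcases (by tauto : (π true ≤ threshold yv ∧ threshold yv ≤ π false) ∨
      (π false ≤ threshold yv ∧ threshold yv ≤ π true)) with ⟨h1, h2⟩ | ⟨h1, h2⟩
  · exact (hAB h1 h2).2 hgap
  · exact ((hBA h1 h2).2 hgap.symm).symm

end StationaryState

theorem isStationaryVec_threshold_iff {n : ℕ} {yv : Fin n → ℝ}
    {q : Fin n → Fin n → Bool → ℝ} {r : Fin n → ℝ} :
    IsStationaryVec (polKernel q (threshold yv)) r ↔
      ∀ j, r j = ∑ i, r i * (if 0 < yv i then q j i true else q j i false) := by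
  simp only [IsStationaryVec, polKernel_threshold]
  exact forall_congr' fun _ => eq_comm

theorem statStateF_threshold {n : ℕ} {yv : Fin n → ℝ} {q : Fin n → Fin n → Bool → ℝ}
    {wA wB lam : ℝ} {g : ℝ → ℝ} {r : Fin n → ℝ} (hwA : 0 ≤ wA) (hwB : 0 ≤ wB)
    (hg0 : g 0 = 0) (hgnn : ∀ x ∈ Set.Ici (0 : ℝ), 0 ≤ g x) (hlam : 0 ≤ lam)
    (hr : ∀ i, 0 ≤ r i)
    (hst : IsStationaryVec (polKernel q (threshold yv)) r) :
    StatStateF yv q wA wB g lam r r fun _ => threshold yv := by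
  refine ⟨fun _ => threshold_mem_Icc yv, fun π' hπ' => ?_, hst, hst⟩
  have hgap : selectionGap r r (fun _ => threshold yv) = 0 := sub_self _
  rw [dObjF_eq, dObjF_eq, hgap, abs_zero, hg0, mul_zero, sub_zero]
  have hpen := mul_nonneg hlam (hgnn _ (Set.mem_Ici.2 (abs_nonneg (selectionGap r r π'))))
  have hA := mul_le_mul_of_nonneg_left (mul_dotProduct_le_threshold (yv := yv) hr (hπ' true)) hwA
  have hB := mul_le_mul_of_nonneg_left (mul_dotProduct_le_threshold (yv := yv) hr (hπ' false)) hwB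
  simp only [utility]
  linarith

theorem stmt_15_general (n : ℕ) (hn : 0 < n) (yv : Fin n → ℝ)
    (hmono : StrictMono yv) (hnz : ∀ i, yv i ≠ 0)
    (q : Fin n → Fin n → Bool → ℝ)
    (hq0 : ∀ j i d, 0 ≤ q j i d) (hq1 : ∀ i d, (∑ j, q j i d) = 1)
    (hband : ∀ j i : Fin n, ∀ d : Bool, (0 < q j i d ↔ |(i : ℤ) - (j : ℤ)| ≤ 1))
    (hhelp : ∀ i j : Fin n, (j : ℕ) = (i : ℕ) + 1 →
      q j i false ≤ q j i true ∧ q i j true ≤ q i j false)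
    (wA wB : ℝ) (hwA : 0 < wA) (hwB : 0 < wB)
    (g : ℝ → ℝ)
    (hg : g 0 = 0 ∧ MonotoneOn g (Set.Ici 0) ∧ ConvexOn ℝ (Set.Ici 0) g ∧
      ∀ x ∈ Set.Ici (0 : ℝ), 0 ≤ g x)
    (lam : ℝ) (hlam : 0 ≤ lam) :
    ∃ r : Fin n → ℝ,
      (IsDistF r ∧
        ∀ j, r j = ∑ i, r i * (if 0 < yv i then q j i true else q j i false)) ∧
      (∀ r', IsDistF r' →
        (∀ j, r' j = ∑ i, r' i * (if 0 < yv i then q j i true else q j i false)) →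
        r' = r) ∧
      (∃ π, StatStateF yv q wA wB g lam r r π) ∧
      (∀ rA rB π, IsDistF rA → IsDistF rB →
        StatStateF yv q wA wB g lam rA rB π → rA = r ∧ rB = r) := by
  obtain ⟨m, rfl⟩ : ∃ m, n = m + 1 := ⟨n - 1, by omega⟩
  obtain ⟨hg0, hgmono, -, hgnn⟩ := hg
  have hq : ∀ d, IsBirthDeath fun j i => q j i d :=
    fun d => ⟨fun j i => hq0 j i d, fun i => hq1 i d, fun j i => hband j i d⟩
  have hT := isBirthDeath_polKernel hq (threshold_mem_Icc yv)
  refine ⟨stationaryDist (polKernel q (threshold yv)),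
    ⟨hT.isDistF_stationaryDist,
      isStationaryVec_threshold_iff.1 hT.isStationaryVec_stationaryDist⟩,
    fun r' hr' hst => hT.eq_stationaryDist (isStationaryVec_threshold_iff.2 hst) hr'.2,
    ⟨_, statStateF_threshold hwA.le hwB.le hg0 hgnn hlam hT.isDistF_stationaryDist.1
      hT.isStationaryVec_stationaryDist⟩, fun rA rB π hdA hdB hss => ?_⟩
  obtain ⟨hA, hB⟩ := hss.policy_eq_threshold hmono.monotone hnz hq
    (fun i => hhelp i.castSucc i.succ (by simp)) hwA hwB hgmono hlam hdA hdB
  obtain ⟨-, -, hstA, hstB⟩ := hss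
  exact ⟨hT.eq_stationaryDist (hA ▸ hstA) hdA.2, hT.eq_stationaryDist (hB ▸ hstB) hdB.2⟩

/-- Unique stationary state for slowly-changing qualifications.
Under the birth–death support assumption and the assumption that selection helps,
the myopic dynamics has a unique stationary state; in it both groups share the unique
stationary distribution of the kernel `T(y'|y) = q(y'|y, 1[y>0])`. -/
theorem stmt_15 (n : ℕ) (hn : 0 < n) (yv : Fin n → ℝ)
    (hmono : StrictMono yv) (hnz : ∀ i, yv i ≠ 0)
    (q : Fin n → Fin n → Bool → ℝ)
    (hq0 : ∀ j i d, 0 ≤ q j i d) (hq1 : ∀ i d, (∑ j, q j i d) = 1)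
    (hband : ∀ j i : Fin n, ∀ d : Bool, (0 < q j i d ↔ |(i : ℤ) - (j : ℤ)| ≤ 1))
    (hhelp : ∀ i j : Fin n, (j : ℕ) = (i : ℕ) + 1 →
      q j i false ≤ q j i true ∧ q i j true ≤ q i j false)
    (wA wB : ℝ) (hwA : 0 < wA) (hwB : 0 < wB) (hw : wA + wB = 1)
    (g : ℝ → ℝ)
    (hg : g 0 = 0 ∧ MonotoneOn g (Set.Ici 0) ∧ ConvexOn ℝ (Set.Ici 0) g ∧
      ∀ x ∈ Set.Ici (0 : ℝ), 0 ≤ g x)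
    (lam : ℝ) (hlam : 0 ≤ lam) :
    ∃ r : Fin n → ℝ,
      (IsDistF r ∧
        ∀ j, r j = ∑ i, r i * (if 0 < yv i then q j i true else q j i false)) ∧
      (∀ r', IsDistF r' →
        (∀ j, r' j = ∑ i, r' i * (if 0 < yv i then q j i true else q j i false)) →
        r' = r) ∧
      (∃ π, StatStateF yv q wA wB g lam r r π) ∧
      (∀ rA rB π, IsDistF rA → IsDistF rB →
        StatStateF yv q wA wB g lam rA rB π → rA = r ∧ rB = r) :=
  stmt_15_general n hn yv hmono hnz q hq0 hq1 hband hhelp wA wB hwA hwB g hg lam hlam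
end
end

section
/- (Stochastic dominance for birth–death chains.) Let P and Q be n × n stochastic matrices on states {1, …, n} with birth–death support: P_{i,j} > 0 if and only if |i − j| ≤ 1, and likewise for Q. Assume P_{k,k+1} ≥ Q_{k,k+1} and P_{k+1,k} ≤ Q_{k+1,k} for every 1 ≤ k ≤ n − 1. Then the (unique) stationary distributions π_P of P and π_Q of Q satisfy, for every s ∈ {1, …, n}, ∑_{i ≥ s} π_P(i) ≥ ∑_{i ≥ s} π_Q(i) (equivalently ∑_{i ≤ s} π_P(i) ≤ ∑_{i ≤ s} π_Q(i)); i.e., π_P stochastically dominates π_Q. -/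
/-!
Across the cut `{i ≤ k}` the probability flow of a stationary distribution balances, and for a
birth–death chain only the edge `k → k + 1` crosses it; this gives detailed balance
`π(k) P(k,k+1) = π(k+1) P(k+1,k)`. Hence `π_P(k+1)/π_P(k) = P(k,k+1)/P(k+1,k)` dominates
`Q(k,k+1)/Q(k+1,k) = π_Q(k+1)/π_Q(k)`, so the likelihood ratio `π_P/π_Q` is nondecreasing, and a
nondecreasing likelihood ratio implies stochastic dominance.
-/

open Finset

/-- `π₀` is a stationary distribution of the row-stochastic matrix `P`. -/
def IsStationaryDistrib {n : ℕ} (P : Fin n → Fin n → ℝ) (π₀ : Fin n → ℝ) : Prop :=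
  (∀ i, 0 ≤ π₀ i) ∧ (∑ i, π₀ i) = 1 ∧ ∀ j, (∑ i, π₀ i * P i j) = π₀ j

theorem sum_flow_out_eq_sum_flow_in {ι : Type*} [Fintype ι] [DecidableEq ι]
    {P : ι → ι → ℝ} {π : ι → ℝ} (hP1 : ∀ i, ∑ j, P i j = 1)
    (hπ : ∀ j, ∑ i, π i * P i j = π j) (S : Finset ι) :
    ∑ i ∈ S, ∑ j ∈ Sᶜ, π i * P i j = ∑ i ∈ Sᶜ, ∑ j ∈ S, π i * P i j := by
  have hout : ∑ i ∈ S, π i = ∑ i ∈ S, ∑ j ∈ S, π i * P i j + ∑ i ∈ S, ∑ j ∈ Sᶜ, π i * P i j := by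
    rw [← sum_add_distrib]
    refine sum_congr rfl fun i _ => ?_
    rw [sum_add_sum_compl, ← mul_sum, hP1, mul_one]
  have hin : ∑ j ∈ S, π j = ∑ i ∈ S, ∑ j ∈ S, π i * P i j + ∑ i ∈ Sᶜ, ∑ j ∈ S, π i * P i j := by
    rw [sum_comm, sum_comm (s := Sᶜ), ← sum_add_distrib]
    refine sum_congr rfl fun j _ => ?_
    rw [sum_add_sum_compl, hπ]
  linarith

theorem sum_le_sum_of_monotone_div_of_isUpperSet {ι : Type*} [Fintype ι] [LinearOrder ι]
    {f g : ι → ℝ} (hf : ∑ i, f i = 1) (hg : ∑ i, g i = 1) (hg0 : ∀ i, 0 < g i)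
    (hfg : Monotone fun i => f i / g i) {s : Finset ι} (hs : IsUpperSet (s : Set ι)) :
    ∑ i ∈ s, g i ≤ ∑ i ∈ s, f i := by
  have hcross : ∀ i ∈ sᶜ, ∀ j ∈ s, f i * g j ≤ f j * g i := fun i hi j hj =>
    (div_le_div_iff₀ (hg0 i) (hg0 j)).1 <|
      hfg (le_of_not_ge fun hji => mem_compl.1 hi (hs hji hj))
  have key : (∑ j ∈ s, g j) * ∑ i ∈ sᶜ, f i ≤ (∑ j ∈ s, f j) * ∑ i ∈ sᶜ, g i := by
    rw [sum_mul_sum, sum_mul_sum]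
    exact sum_le_sum fun j hj => sum_le_sum fun i hi => by linarith [hcross i hi j hj]
  rw [show ∑ i ∈ sᶜ, f i = 1 - ∑ i ∈ s, f i by linarith [sum_add_sum_compl s f],
    show ∑ i ∈ sᶜ, g i = 1 - ∑ i ∈ s, g i by linarith [sum_add_sum_compl s g]] at key
  linarith

theorem sum_le_sum_of_monotone_div_of_isLowerSet {ι : Type*} [Fintype ι] [LinearOrder ι]
    {f g : ι → ℝ} (hf : ∑ i, f i = 1) (hg : ∑ i, g i = 1) (hg0 : ∀ i, 0 < g i)
    (hfg : Monotone fun i => f i / g i) {s : Finset ι} (hs : IsLowerSet (s : Set ι)) :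
    ∑ i ∈ s, f i ≤ ∑ i ∈ s, g i := by
  have := sum_le_sum_of_monotone_div_of_isUpperSet hf hg hg0 hfg (s := sᶜ)
    (by simpa using hs.compl)
  linarith [sum_add_sum_compl s f, sum_add_sum_compl s g]

namespace BirthDeath

variable {n : ℕ} {P : Fin n → Fin n → ℝ}

theorem eq_zero_of_far (hP0 : ∀ i j, 0 ≤ P i j)
    (hband : ∀ i j, 0 < P i j ↔ |(i : ℤ) - (j : ℤ)| ≤ 1) {i j : Fin n}
    (hij : (i : ℕ) + 1 < j ∨ (j : ℕ) + 1 < i) : P i j = 0 := by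
  by_contra hne
  have := (hband i j).1 ((hP0 i j).lt_of_ne' hne)
  rw [abs_le] at this
  omega

theorem pos_of_covBy (hband : ∀ i j, 0 < P i j ↔ |(i : ℤ) - (j : ℤ)| ≤ 1) {i j : Fin n}
    (hij : i ⋖ j) : 0 < P i j ∧ 0 < P j i := by
  have hj : (i : ℕ) + 1 = j := Nat.covBy_iff_add_one_eq.1 (Fin.covBy_iff.1 hij)
  refine ⟨(hband i j).2 ?_, (hband j i).2 ?_⟩ <;> rw [abs_le] <;> omega

theorem sum_sum_eq_single_of_far (hP0 : ∀ i j, 0 ≤ P i j)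
    (hband : ∀ i j, 0 < P i j ↔ |(i : ℤ) - (j : ℤ)| ≤ 1) (π : Fin n → ℝ)
    {A B : Finset (Fin n)} {i j : Fin n} (hi : i ∈ A) (hj : j ∈ B)
    (hfar : ∀ a ∈ A, ∀ b ∈ B, (a, b) ≠ (i, j) → (a : ℕ) + 1 < b ∨ (b : ℕ) + 1 < a) :
    ∑ a ∈ A, ∑ b ∈ B, π a * P a b = π i * P i j := by
  rw [← sum_product']
  refine sum_eq_single_of_mem (i, j) (mem_product.2 ⟨hi, hj⟩) fun ab hab hne => ?_
  obtain ⟨ha, hb⟩ := mem_product.1 hab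
  exact mul_eq_zero_of_right _ (eq_zero_of_far hP0 hband (hfar _ ha _ hb hne))

theorem detailed_balance (hP0 : ∀ i j, 0 ≤ P i j)
    (hband : ∀ i j, 0 < P i j ↔ |(i : ℤ) - (j : ℤ)| ≤ 1) (hP1 : ∀ i, ∑ j, P i j = 1)
    {π : Fin n → ℝ} (hπ : ∀ j, ∑ i, π i * P i j = π j) {i j : Fin n} (hij : i ⋖ j) :
    π i * P i j = π j * P j i := by
  have hj : (i : ℕ) + 1 = j := Nat.covBy_iff_add_one_eq.1 (Fin.covBy_iff.1 hij)
  have hi_mem : i ∈ Iic i := mem_Iic.2 le_rfl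
  have hj_mem : j ∈ (Iic i)ᶜ := by simp [hij.lt]
  rw [← sum_sum_eq_single_of_far hP0 hband π hi_mem hj_mem,
    ← sum_sum_eq_single_of_far hP0 hband π hj_mem hi_mem, sum_flow_out_eq_sum_flow_in hP1 hπ] <;>
  · intro a ha b hb hne
    simp only [mem_Iic, mem_compl, not_le, Fin.le_def, ne_eq, Prod.mk.injEq,
      Fin.ext_iff] at ha hb hne
    omega

theorem stationary_pos (hP0 : ∀ i j, 0 ≤ P i j)
    (hband : ∀ i j, 0 < P i j ↔ |(i : ℤ) - (j : ℤ)| ≤ 1) (hP1 : ∀ i, ∑ j, P i j = 1)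
    {π : Fin n → ℝ} (hπ : IsStationaryDistrib P π) (i : Fin n) : 0 < π i := by
  have hstep : ∀ a b : Fin n, a ⋖ b → (π a ≠ 0 ↔ π b ≠ 0) := by
    intro a b hab
    obtain ⟨hab0, hba0⟩ := pos_of_covBy hband hab
    have hdb := detailed_balance hP0 hband hP1 hπ.2.2 hab
    constructor
    · intro ha hb
      rw [hb, zero_mul] at hdb
      exact mul_ne_zero ha hab0.ne' hdb
    · intro hb ha
      rw [ha, zero_mul] at hdb
      exact mul_ne_zero hb hba0.ne' hdb.symm
  -- `Prop` is ordered by implication, so nonvanishing propagates along the chain both ways.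
  have hmono : Monotone fun a => π a ≠ 0 :=
    (monotone_iff_forall_covBy _).2 fun a b hab => (hstep a b hab).1
  have hanti : Antitone fun a => π a ≠ 0 :=
    (antitone_iff_forall_covBy _).2 fun a b hab => (hstep a b hab).2
  obtain ⟨k, -, hk⟩ := exists_ne_zero_of_sum_ne_zero (hπ.2.1.symm ▸ one_ne_zero)
  have hi : π i ≠ 0 := (le_total k i).elim (fun h => hmono h hk) (fun h => hanti h hk)
  exact (hπ.1 i).lt_of_ne' hi

theorem monotone_stationary_div {Q : Fin n → Fin n → ℝ}
    (hP0 : ∀ i j, 0 ≤ P i j) (hP1 : ∀ i, ∑ j, P i j = 1)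
    (hQ0 : ∀ i j, 0 ≤ Q i j) (hQ1 : ∀ i, ∑ j, Q i j = 1)
    (hPband : ∀ i j, 0 < P i j ↔ |(i : ℤ) - (j : ℤ)| ≤ 1)
    (hQband : ∀ i j, 0 < Q i j ↔ |(i : ℤ) - (j : ℤ)| ≤ 1)
    (hcomp : ∀ i j : Fin n, (j : ℕ) = (i : ℕ) + 1 → Q i j ≤ P i j ∧ P j i ≤ Q j i)
    {πP πQ : Fin n → ℝ} (hπP : IsStationaryDistrib P πP) (hπQ : IsStationaryDistrib Q πQ) :
    Monotone fun i => πP i / πQ i := by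
  refine (monotone_iff_forall_covBy _).2 fun i j hij => ?_
  obtain ⟨hQij, hPji⟩ := hcomp i j (Nat.covBy_iff_add_one_eq.1 (Fin.covBy_iff.1 hij)).symm
  have hπP0 := stationary_pos hP0 hPband hP1 hπP
  have hπQ0 := stationary_pos hQ0 hQband hQ1 hπQ
  have hdbP := detailed_balance hP0 hPband hP1 hπP.2.2 hij
  have hdbQ := detailed_balance hQ0 hQband hQ1 hπQ.2.2 hij
  have hPQ : 0 < P j i * Q j i := mul_pos (pos_of_covBy hPband hij).2 (pos_of_covBy hQband hij).2
  rw [div_le_div_iff₀ (hπQ0 i) (hπQ0 j)]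
  refine le_of_mul_le_mul_right ?_ hPQ
  calc πP i * πQ j * (P j i * Q j i) = πP i * πQ i * (P j i * Q i j) := by
        linear_combination (-(πP i * P j i)) * hdbQ
    _ ≤ πP i * πQ i * (Q j i * P i j) :=
        mul_le_mul_of_nonneg_left (mul_le_mul hPji hQij (hQ0 _ _) (hQ0 _ _))
          (mul_pos (hπP0 i) (hπQ0 i)).le
    _ = πP j * πQ i * (P j i * Q j i) := by linear_combination (πQ i * Q j i) * hdbP

end BirthDeath

theorem stmt_16_general (n : ℕ) (P Q : Fin n → Fin n → ℝ)
    (hP0 : ∀ i j, 0 ≤ P i j) (hP1 : ∀ i, (∑ j, P i j) = 1)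
    (hQ0 : ∀ i j, 0 ≤ Q i j) (hQ1 : ∀ i, (∑ j, Q i j) = 1)
    (hPband : ∀ i j, 0 < P i j ↔ |(i : ℤ) - (j : ℤ)| ≤ 1)
    (hQband : ∀ i j, 0 < Q i j ↔ |(i : ℤ) - (j : ℤ)| ≤ 1)
    (hcomp : ∀ i j : Fin n, (j : ℕ) = (i : ℕ) + 1 →
      Q i j ≤ P i j ∧ P j i ≤ Q j i)
    (πP πQ : Fin n → ℝ)
    (hπP : IsStationaryDistrib P πP) (hπQ : IsStationaryDistrib Q πQ) :
    ∀ s : Fin n,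
      (∑ i ∈ univ.filter (fun i => s ≤ i), πQ i) ≤
        (∑ i ∈ univ.filter (fun i => s ≤ i), πP i) ∧
      (∑ i ∈ univ.filter (fun i => i ≤ s), πP i) ≤
        (∑ i ∈ univ.filter (fun i => i ≤ s), πQ i) := by
  have hπQ0 := BirthDeath.stationary_pos hQ0 hQband hQ1 hπQ
  have hmono :=
    BirthDeath.monotone_stationary_div hP0 hP1 hQ0 hQ1 hPband hQband hcomp hπP hπQ
  intro s
  exact ⟨sum_le_sum_of_monotone_div_of_isUpperSet hπP.2.1 hπQ.2.1 hπQ0 hmono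
      (by rw [filter_le_eq_Ici, coe_Ici]; exact isUpperSet_Ici s),
    sum_le_sum_of_monotone_div_of_isLowerSet hπP.2.1 hπQ.2.1 hπQ0 hmono
      (by rw [filter_ge_eq_Iic, coe_Iic]; exact isLowerSet_Iic s)⟩

/-- Stochastic dominance for birth–death chains. If `P` and `Q`
are birth–death stochastic matrices with `P_{k,k+1} ≥ Q_{k,k+1}` and
`P_{k+1,k} ≤ Q_{k+1,k}` for all `k`, then the stationary distribution of `P`
stochastically dominates that of `Q`. -/
theorem stmt_16 (n : ℕ) (hn : 0 < n) (P Q : Fin n → Fin n → ℝ)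
    (hP0 : ∀ i j, 0 ≤ P i j) (hP1 : ∀ i, (∑ j, P i j) = 1)
    (hQ0 : ∀ i j, 0 ≤ Q i j) (hQ1 : ∀ i, (∑ j, Q i j) = 1)
    (hPband : ∀ i j, 0 < P i j ↔ |(i : ℤ) - (j : ℤ)| ≤ 1)
    (hQband : ∀ i j, 0 < Q i j ↔ |(i : ℤ) - (j : ℤ)| ≤ 1)
    (hcomp : ∀ i j : Fin n, (j : ℕ) = (i : ℕ) + 1 →
      Q i j ≤ P i j ∧ P j i ≤ Q j i)
    (πP πQ : Fin n → ℝ)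
    (hπP : IsStationaryDistrib P πP) (hπQ : IsStationaryDistrib Q πQ) :
    ∀ s : Fin n,
      (∑ i ∈ univ.filter (fun i => s ≤ i), πQ i) ≤
        (∑ i ∈ univ.filter (fun i => s ≤ i), πP i) ∧
      (∑ i ∈ univ.filter (fun i => i ≤ s), πP i) ≤
        (∑ i ∈ univ.filter (fun i => i ≤ s), πQ i) :=
  stmt_16_general n P Q hP0 hP1 hQ0 hQ1 hPband hQband hcomp πP πQ hπP hπQ
end

section
/- (Unselected-mass comparison.) Suppose Pr(Y>0|A) ≥ Pr(Y>0|B) and let π be any optimal policy (maximizer of J) for some λ ≥ 0 and admissible g. With f(y',0) = p(y'|A)·(1 − π(A,y')) − p(y'|B)·(1 − π(B,y')), one has ∑_{y'} |f(y',0)| ≤ ∑_{y'} |p(y'|A) − p(y'|B)|. -/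
/-!
Static setting: `Y` is a finite set of nonzero real qualifications; the two groups
`A`/`B` are encoded as `true`/`false`; `p c y` is the joint pmf on group × qualification.
-/

open Finset Filter Topology
open scoped Classical

noncomputable section

/-- Marginal probability of group `c`. -/
def pG (Y : Finset ℝ) (p : Bool → ℝ → ℝ) (c : Bool) : ℝ := ∑ y ∈ Y, p c y

/-- Conditional pmf `p(y|c)`. -/
def pCond (Y : Finset ℝ) (p : Bool → ℝ → ℝ) (c : Bool) (y : ℝ) : ℝ := p c y / pG Y p c

/-- `p` is a pmf on `{A,B} × Y`, with positive group marginals, and all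
qualifications in `Y` are nonzero. -/
def IsPMF (Y : Finset ℝ) (p : Bool → ℝ → ℝ) : Prop :=
  (∀ y ∈ Y, y ≠ 0) ∧ (∀ c, ∀ y ∈ Y, 0 ≤ p c y) ∧
    (∑ c : Bool, ∑ y ∈ Y, p c y) = 1 ∧ (∀ c, 0 < pG Y p c)

/-- Institution utility `U(π) = ∑ p(c,y)·y·π(c,y)`. -/
def util (Y : Finset ℝ) (p π : Bool → ℝ → ℝ) : ℝ :=
  ∑ c : Bool, ∑ y ∈ Y, p c y * y * π c y

/-- Selection rate of group `c`. -/
def selRate (Y : Finset ℝ) (p π : Bool → ℝ → ℝ) (c : Bool) : ℝ :=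
  ∑ y ∈ Y, pCond Y p c y * π c y

/-- Disparity `Δ(π)`. -/
def disp (Y : Finset ℝ) (p π : Bool → ℝ → ℝ) : ℝ :=
  |selRate Y p π true - selRate Y p π false|

/-- Penalized objective `J(π) = U(π) − λ·g(Δ(π))`. -/
def obj (Y : Finset ℝ) (p : Bool → ℝ → ℝ) (g : ℝ → ℝ) (lam : ℝ) (π : Bool → ℝ → ℝ) : ℝ :=
  util Y p π - lam * g (disp Y p π)

/-- Optimal policy: admissible maximizer of `J`. -/
def IsOptimal (Y : Finset ℝ) (p : Bool → ℝ → ℝ) (g : ℝ → ℝ) (lam : ℝ)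
    (π : Bool → ℝ → ℝ) : Prop :=
  Admissible Y π ∧ ∀ π', Admissible Y π' → obj Y p g lam π' ≤ obj Y p g lam π

/-- `Pr(Y > 0 | c)`. -/
def posRate (Y : Finset ℝ) (p : Bool → ℝ → ℝ) (c : Bool) : ℝ :=
  ∑ y ∈ Y.filter (fun y => 0 < y), pCond Y p c y

/-- `Δ_UM = Pr(Y>0|A) − Pr(Y>0|B)`. -/
def dUM (Y : Finset ℝ) (p : Bool → ℝ → ℝ) : ℝ := posRate Y p true - posRate Y p false

/-- `E[Y₊] = ∑_{c, y>0} p(c,y)·y`, the unconstrained maximal utility. -/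
def eyPos (Y : Finset ℝ) (p : Bool → ℝ → ℝ) : ℝ :=
  ∑ c : Bool, ∑ y ∈ Y.filter (fun y => 0 < y), p c y * y

/-- The index set `𝒯_e`. -/
def TE (Y : Finset ℝ) (p : Bool → ℝ → ℝ) : Finset (ℝ × Bool) :=
  (Y ×ˢ (Finset.univ : Finset Bool)).filter
    (fun yc => (yc.2 = true ∧ 0 < yc.1 ∧ 0 < pCond Y p true yc.1) ∨
               (yc.2 = false ∧ yc.1 < 0 ∧ 0 < pCond Y p false yc.1))

/-!
An optimal policy cannot be changed so as to raise the utility without raising the disparity.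
In group `c` let `U_c` be the conditional mass of unselected positives and `N_c` that of
selected negatives, so that `S_c = Pr(Y>0|c) - U_c + N_c`. Selecting a fraction of the
unselected positives or deselecting a fraction of the selected negatives raises the utility;
choosing the fractions so that the two rates move towards each other, or by the same amount,
shows that `U_c > 0` forces `S_{¬c} ≤ S_c`, that `N_c > 0` forces `S_c ≤ S_{¬c}`, and that
none of the pairs `(U_c, N_c)`, `(U_A, U_B)`, `(N_A, N_B)` is positive in both entries.
Together with `Pr(Y>0|B) ≤ Pr(Y>0|A)` this gives `U_B = N_A = 0` and `S_B ≤ S_A`.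

Now write `f(y,0) = u y - v y` with `u y = p(y|A) - p(y|B)` and
`v y = p(y|A) π(A,y) - p(y|B) π(B,y)`: for `y > 0` we have
`u y - v y = p(y|A)(1 - π(A,y)) ≥ 0`, for `y < 0` we have `v y = -p(y|B) π(B,y) ≤ 0`,
so `|u y - v y| ≤ |u y| - v y` in both cases, and `∑ v = S_A - S_B ≥ 0`.
-/

lemma Finset.sum_abs_sub_le_sum_abs {ι : Type*} {s : Finset ι} {u v : ι → ℝ}
    (h : ∀ i ∈ s, 0 ≤ u i - v i ∨ v i ≤ 0) (hv : 0 ≤ ∑ i ∈ s, v i) :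
    ∑ i ∈ s, |u i - v i| ≤ ∑ i ∈ s, |u i| := by
  have hpt : ∀ i ∈ s, |u i - v i| ≤ |u i| - v i := by
    intro i hi
    rcases h i hi with h | h
    · rw [abs_of_nonneg h]
      linarith [le_abs_self (u i)]
    · linarith [abs_sub (u i) (v i), abs_of_nonpos h]
  calc ∑ i ∈ s, |u i - v i| ≤ ∑ i ∈ s, (|u i| - v i) := sum_le_sum hpt
    _ ≤ ∑ i ∈ s, |u i| := by rw [sum_sub_distrib]; linarith

section

variable {Y : Finset ℝ} {p π : Bool → ℝ → ℝ}

lemma pCond_nonneg (hp : IsPMF Y p) (c : Bool) {y : ℝ} (hy : y ∈ Y) : 0 ≤ pCond Y p c y :=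
  div_nonneg (hp.2.1 c y hy) (hp.2.2.2 c).le

lemma p_eq_pCond_mul_pG (hp : IsPMF Y p) (c : Bool) (y : ℝ) :
    p c y = pCond Y p c y * pG Y p c := by
  rw [pCond, div_mul_cancel₀ _ (hp.2.2.2 c).ne']

lemma disp_eq_abs_sub (c : Bool) :
    disp Y p π = |selRate Y p π c - selRate Y p π (!c)| := by
  cases c
  · exact abs_sub_comm _ _
  · rfl

lemma disp_nonneg : 0 ≤ disp Y p π := abs_nonneg _

def unselPosMass (Y : Finset ℝ) (p π : Bool → ℝ → ℝ) (c : Bool) : ℝ :=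
  ∑ y ∈ Y with 0 < y, pCond Y p c y * (1 - π c y)

def selNegMass (Y : Finset ℝ) (p π : Bool → ℝ → ℝ) (c : Bool) : ℝ :=
  ∑ y ∈ Y with ¬ 0 < y, pCond Y p c y * π c y

lemma selRate_eq_posRate_sub_add (c : Bool) :
    selRate Y p π c = posRate Y p c - unselPosMass Y p π c + selNegMass Y p π c := by
  rw [selRate, ← sum_filter_add_sum_filter_not Y (0 < ·), posRate, unselPosMass, selNegMass]
  simp only [mul_sub, mul_one, sum_sub_distrib]
  ring

lemma pCond_mul_one_sub_nonneg (hp : IsPMF Y p) (hπ : Admissible Y π) (c : Bool) {y : ℝ}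
    (hy : y ∈ Y) : 0 ≤ pCond Y p c y * (1 - π c y) :=
  mul_nonneg (pCond_nonneg hp c hy) (sub_nonneg.mpr (hπ c y hy).2)

lemma pCond_mul_nonneg (hp : IsPMF Y p) (hπ : Admissible Y π) (c : Bool) {y : ℝ}
    (hy : y ∈ Y) : 0 ≤ pCond Y p c y * π c y :=
  mul_nonneg (pCond_nonneg hp c hy) (hπ c y hy).1

lemma unselPosMass_nonneg (hp : IsPMF Y p) (hπ : Admissible Y π) (c : Bool) :
    0 ≤ unselPosMass Y p π c :=
  sum_nonneg fun _ hy => pCond_mul_one_sub_nonneg hp hπ c (mem_filter.mp hy).1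

lemma selNegMass_nonneg (hp : IsPMF Y p) (hπ : Admissible Y π) (c : Bool) :
    0 ≤ selNegMass Y p π c :=
  sum_nonneg fun _ hy => pCond_mul_nonneg hp hπ c (mem_filter.mp hy).1

lemma unselPosMass_eq_zero_iff (hp : IsPMF Y p) (hπ : Admissible Y π) (c : Bool) :
    unselPosMass Y p π c = 0 ↔ ∀ y ∈ Y, 0 < y → pCond Y p c y * (1 - π c y) = 0 := by
  rw [unselPosMass, sum_eq_zero_iff_of_nonneg
    fun _ hy => pCond_mul_one_sub_nonneg hp hπ c (mem_filter.mp hy).1]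
  simp only [mem_filter, and_imp]

lemma selNegMass_eq_zero_iff (hp : IsPMF Y p) (hπ : Admissible Y π) (c : Bool) :
    selNegMass Y p π c = 0 ↔ ∀ y ∈ Y, ¬ 0 < y → pCond Y p c y * π c y = 0 := by
  rw [selNegMass, sum_eq_zero_iff_of_nonneg
    fun _ hy => pCond_mul_nonneg hp hπ c (mem_filter.mp hy).1]
  simp only [mem_filter, and_imp]

lemma unselPosMass_pos_iff (hp : IsPMF Y p) (hπ : Admissible Y π) (c : Bool) :
    0 < unselPosMass Y p π c ↔ ∃ y ∈ Y, 0 < y ∧ 0 < pCond Y p c y * (1 - π c y) := by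
  rw [unselPosMass, sum_pos_iff_of_nonneg
    fun _ hy => pCond_mul_one_sub_nonneg hp hπ c (mem_filter.mp hy).1]
  simp only [mem_filter, and_assoc]

lemma selNegMass_pos_iff (hp : IsPMF Y p) (hπ : Admissible Y π) (c : Bool) :
    0 < selNegMass Y p π c ↔ ∃ y ∈ Y, ¬ 0 < y ∧ 0 < pCond Y p c y * π c y := by
  rw [selNegMass, sum_pos_iff_of_nonneg
    fun _ hy => pCond_mul_nonneg hp hπ c (mem_filter.mp hy).1]
  simp only [mem_filter, and_assoc]

def adjust (π : Bool → ℝ → ℝ) (a b : Bool → ℝ) : Bool → ℝ → ℝ :=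
  fun c y => if 0 < y then π c y + a c * (1 - π c y) else (1 - b c) * π c y

lemma admissible_adjust {a b : Bool → ℝ} (hπ : Admissible Y π)
    (ha : ∀ c, a c ∈ Set.Icc 0 1) (hb : ∀ c, b c ∈ Set.Icc 0 1) :
    Admissible Y (adjust π a b) := by
  intro c y hy
  obtain ⟨hπ0, hπ1⟩ := hπ c y hy
  obtain ⟨ha0, ha1⟩ := ha c
  obtain ⟨hb0, hb1⟩ := hb c
  unfold adjust
  split_ifs <;> constructor <;> nlinarith

lemma selRate_adjust (a b : Bool → ℝ) (c : Bool) :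
    selRate Y p (adjust π a b) c = selRate Y p π c +
      (a c * unselPosMass Y p π c - b c * selNegMass Y p π c) := by
  simp only [selRate, unselPosMass, selNegMass, sum_filter, mul_sum, ← sum_add_distrib,
    ← sum_sub_distrib]
  refine sum_congr rfl fun y _ => ?_
  unfold adjust
  split_ifs <;> ring

lemma util_lt_util_adjust {a b : Bool → ℝ} (hp : IsPMF Y p) (hπ : Admissible Y π)
    (ha : ∀ c, 0 ≤ a c) (hb : ∀ c, 0 ≤ b c)
    (hgain : ∃ c, 0 < a c ∧ 0 < unselPosMass Y p π c ∨ 0 < b c ∧ 0 < selNegMass Y p π c) :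
    util Y p π < util Y p (adjust π a b) := by
  have gain_eq : ∀ c y, p c y * y * adjust π a b c y - p c y * y * π c y =
      if 0 < y then pG Y p c * y * a c * (pCond Y p c y * (1 - π c y))
      else pG Y p c * (-y) * b c * (pCond Y p c y * π c y) := by
    intro c y
    rw [p_eq_pCond_mul_pG hp, adjust]
    split_ifs <;> ring
  have gain_nonneg : ∀ c, ∀ y ∈ Y, p c y * y * π c y ≤ p c y * y * adjust π a b c y := by
    intro c y hy
    have hq := pCond_nonneg hp c hy
    obtain ⟨hπ0, hπ1⟩ := hπ c y hy
    have hG := (hp.2.2.2 c).le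
    rw [← sub_nonneg, gain_eq]
    split_ifs with hy0
    · exact mul_nonneg (mul_nonneg (mul_nonneg hG hy0.le) (ha c)) (mul_nonneg hq (by linarith))
    · exact mul_nonneg (mul_nonneg (mul_nonneg hG (by linarith)) (hb c)) (mul_nonneg hq hπ0)
  obtain ⟨c, hc⟩ := hgain
  refine sum_lt_sum (fun c _ => sum_le_sum (gain_nonneg c)) ⟨c, mem_univ c, ?_⟩
  have hG := hp.2.2.2 c
  rcases hc with ⟨hac, hU⟩ | ⟨hbc, hN⟩
  · obtain ⟨y, hyY, hy0, hqy⟩ := (unselPosMass_pos_iff hp hπ c).mp hU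
    refine sum_lt_sum (gain_nonneg c) ⟨y, hyY, ?_⟩
    rw [← sub_pos, gain_eq, if_pos hy0]
    positivity
  · obtain ⟨y, hyY, hy0, hqy⟩ := (selNegMass_pos_iff hp hπ c).mp hN
    have hyneg : 0 < -y := neg_pos.mpr ((not_lt.mp hy0).lt_of_ne (hp.1 y hyY))
    refine sum_lt_sum (gain_nonneg c) ⟨y, hyY, ?_⟩
    rw [← sub_pos, gain_eq, if_neg hy0]
    positivity

variable {g : ℝ → ℝ} {lam : ℝ}

lemma IsOptimal.util_le_of_disp_le (hg : MonotoneOn g (Set.Ici 0)) (hlam : 0 ≤ lam)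
    (hopt : IsOptimal Y p g lam π) {π' : Bool → ℝ → ℝ} (h' : Admissible Y π')
    (hD : disp Y p π' ≤ disp Y p π) : util Y p π' ≤ util Y p π := by
  have hJ := hopt.2 π' h'
  have hgD : g (disp Y p π') ≤ g (disp Y p π) := hg disp_nonneg disp_nonneg hD
  unfold obj at hJ
  linarith [mul_le_mul_of_nonneg_left hgD hlam]

lemma IsOptimal.disp_lt_disp_adjust (hp : IsPMF Y p) (hg : MonotoneOn g (Set.Ici 0))
    (hlam : 0 ≤ lam) (hopt : IsOptimal Y p g lam π) {a b : Bool → ℝ}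
    (ha : ∀ c, a c ∈ Set.Icc 0 1) (hb : ∀ c, b c ∈ Set.Icc 0 1)
    (hgain : ∃ c, 0 < a c ∧ 0 < unselPosMass Y p π c ∨ 0 < b c ∧ 0 < selNegMass Y p π c) :
    disp Y p π < disp Y p (adjust π a b) :=
  lt_of_not_ge fun hD =>
    (util_lt_util_adjust hp hopt.1 (fun c => (ha c).1) (fun c => (hb c).1) hgain).not_ge
      (hopt.util_le_of_disp_le hg hlam (admissible_adjust hopt.1 ha hb) hD)

lemma IsOptimal.selRate_le_of_unselPosMass_pos (hp : IsPMF Y p)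
    (hg : MonotoneOn g (Set.Ici 0)) (hlam : 0 ≤ lam) (hopt : IsOptimal Y p g lam π)
    {c : Bool} (hU : 0 < unselPosMass Y p π c) : selRate Y p π (!c) ≤ selRate Y p π c := by
  by_contra! hlt
  set δ := min (unselPosMass Y p π c) (selRate Y p π (!c) - selRate Y p π c)
  have hδ : 0 < δ := lt_min hU (sub_pos.mpr hlt)
  have hδgap : δ ≤ selRate Y p π (!c) - selRate Y p π c := min_le_right _ _
  have key := hopt.disp_lt_disp_adjust hp hg hlam
    (a := fun c' => if c' = c then δ / unselPosMass Y p π c else 0) (b := 0)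
    (fun c' => by
      split_ifs
      exacts [⟨by positivity, div_le_one_of_le₀ (min_le_left _ _) hU.le⟩,
        ⟨le_rfl, zero_le_one⟩])
    (fun _ => ⟨le_rfl, zero_le_one⟩) ⟨c, .inl ⟨by simp only [if_pos]; positivity, hU⟩⟩
  rw [disp_eq_abs_sub c, disp_eq_abs_sub c, selRate_adjust, selRate_adjust] at key
  simp only [if_pos, Bool.not_ne_self, if_false, Pi.zero_apply, zero_mul, sub_zero, add_zero,
    div_mul_cancel₀ _ hU.ne'] at key
  rw [abs_of_neg (sub_neg.mpr hlt), abs_of_nonpos (by linarith)] at key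
  linarith

lemma IsOptimal.selRate_le_of_selNegMass_pos (hp : IsPMF Y p)
    (hg : MonotoneOn g (Set.Ici 0)) (hlam : 0 ≤ lam) (hopt : IsOptimal Y p g lam π)
    {c : Bool} (hN : 0 < selNegMass Y p π c) : selRate Y p π c ≤ selRate Y p π (!c) := by
  by_contra! hlt
  set δ := min (selNegMass Y p π c) (selRate Y p π c - selRate Y p π (!c))
  have hδ : 0 < δ := lt_min hN (sub_pos.mpr hlt)
  have hδgap : δ ≤ selRate Y p π c - selRate Y p π (!c) := min_le_right _ _
  have key := hopt.disp_lt_disp_adjust hp hg hlam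
    (a := 0) (b := fun c' => if c' = c then δ / selNegMass Y p π c else 0)
    (fun _ => ⟨le_rfl, zero_le_one⟩)
    (fun c' => by
      split_ifs
      exacts [⟨by positivity, div_le_one_of_le₀ (min_le_left _ _) hN.le⟩,
        ⟨le_rfl, zero_le_one⟩])
    ⟨c, .inr ⟨by simp only [if_pos]; positivity, hN⟩⟩
  rw [disp_eq_abs_sub c, disp_eq_abs_sub c, selRate_adjust, selRate_adjust] at key
  simp only [if_pos, Bool.not_ne_self, if_false, Pi.zero_apply, zero_mul, zero_sub, sub_zero,
    add_zero, div_mul_cancel₀ _ hN.ne'] at key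
  rw [abs_of_pos (sub_pos.mpr hlt), abs_of_nonneg (by linarith)] at key
  linarith

lemma IsOptimal.unselPosMass_eq_zero_or_selNegMass_eq_zero (hp : IsPMF Y p)
    (hg : MonotoneOn g (Set.Ici 0)) (hlam : 0 ≤ lam) (hopt : IsOptimal Y p g lam π)
    (c : Bool) : unselPosMass Y p π c = 0 ∨ selNegMass Y p π c = 0 := by
  by_contra! h
  have hU := (unselPosMass_nonneg hp hopt.1 c).lt_of_ne' h.1
  have hN := (selNegMass_nonneg hp hopt.1 c).lt_of_ne' h.2
  have hUN : ∀ c, 0 ≤ unselPosMass Y p π c + selNegMass Y p π c := fun c =>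
    add_nonneg (unselPosMass_nonneg hp hopt.1 c) (selNegMass_nonneg hp hopt.1 c)
  -- trade selected negatives for selected positives, keeping both selection rates fixed
  have key := hopt.disp_lt_disp_adjust hp hg hlam
    (a := fun c => selNegMass Y p π c / (unselPosMass Y p π c + selNegMass Y p π c))
    (b := fun c => unselPosMass Y p π c / (unselPosMass Y p π c + selNegMass Y p π c))
    (fun c => ⟨div_nonneg (selNegMass_nonneg hp hopt.1 c) (hUN c),
      div_le_one_of_le₀ (le_add_of_nonneg_left (unselPosMass_nonneg hp hopt.1 c)) (hUN c)⟩)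
    (fun c => ⟨div_nonneg (unselPosMass_nonneg hp hopt.1 c) (hUN c),
      div_le_one_of_le₀ (le_add_of_nonneg_right (selNegMass_nonneg hp hopt.1 c)) (hUN c)⟩)
    ⟨c, .inl ⟨div_pos hN (add_pos hU hN), hU⟩⟩
  have hshift : ∀ c, selNegMass Y p π c / (unselPosMass Y p π c + selNegMass Y p π c) *
      unselPosMass Y p π c - unselPosMass Y p π c /
      (unselPosMass Y p π c + selNegMass Y p π c) * selNegMass Y p π c = 0 := fun c => by ring
  simp only [disp, selRate_adjust, hshift, add_zero, lt_self_iff_false] at key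

lemma IsOptimal.exists_unselPosMass_eq_zero (hp : IsPMF Y p)
    (hg : MonotoneOn g (Set.Ici 0)) (hlam : 0 ≤ lam) (hopt : IsOptimal Y p g lam π) :
    ∃ c, unselPosMass Y p π c = 0 := by
  by_contra! h
  have hU c : 0 < unselPosMass Y p π c := (unselPosMass_nonneg hp hopt.1 c).lt_of_ne' (h c)
  set m := min (unselPosMass Y p π true) (unselPosMass Y p π false)
  have hm : 0 < m := lt_min (hU true) (hU false)
  have hmU : ∀ c, m ≤ unselPosMass Y p π c := by
    intro c; cases c
    exacts [min_le_right _ _, min_le_left _ _]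
  have key := hopt.disp_lt_disp_adjust hp hg hlam
    (a := fun c => m / unselPosMass Y p π c) (b := 0)
    (fun c => ⟨(div_pos hm (hU c)).le, div_le_one_of_le₀ (hmU c) (hU c).le⟩)
    (fun _ => ⟨le_rfl, zero_le_one⟩) ⟨true, .inl ⟨div_pos hm (hU true), hU true⟩⟩
  simp only [disp, selRate_adjust, Pi.zero_apply, zero_mul, sub_zero,
    div_mul_cancel₀ _ (hU _).ne', add_sub_add_right_eq_sub, lt_self_iff_false] at key

lemma IsOptimal.exists_selNegMass_eq_zero (hp : IsPMF Y p)
    (hg : MonotoneOn g (Set.Ici 0)) (hlam : 0 ≤ lam) (hopt : IsOptimal Y p g lam π) :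
    ∃ c, selNegMass Y p π c = 0 := by
  by_contra! h
  have hN c : 0 < selNegMass Y p π c := (selNegMass_nonneg hp hopt.1 c).lt_of_ne' (h c)
  set m := min (selNegMass Y p π true) (selNegMass Y p π false)
  have hm : 0 < m := lt_min (hN true) (hN false)
  have hmN : ∀ c, m ≤ selNegMass Y p π c := by
    intro c; cases c
    exacts [min_le_right _ _, min_le_left _ _]
  have key := hopt.disp_lt_disp_adjust hp hg hlam
    (a := 0) (b := fun c => m / selNegMass Y p π c)
    (fun _ => ⟨le_rfl, zero_le_one⟩)
    (fun c => ⟨(div_pos hm (hN c)).le, div_le_one_of_le₀ (hmN c) (hN c).le⟩)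
    ⟨true, .inr ⟨div_pos hm (hN true), hN true⟩⟩
  simp only [disp, selRate_adjust, Pi.zero_apply, zero_mul, zero_sub,
    div_mul_cancel₀ _ (hN _).ne', ← sub_eq_add_neg, sub_sub_sub_cancel_right,
    lt_self_iff_false] at key

lemma IsOptimal.selRate_false_le_selRate_true (hp : IsPMF Y p)
    (hadv : posRate Y p false ≤ posRate Y p true) (hg : MonotoneOn g (Set.Ici 0))
    (hlam : 0 ≤ lam) (hopt : IsOptimal Y p g lam π) :
    selRate Y p π false ≤ selRate Y p π true := by
  by_contra! hlt
  have hUA : unselPosMass Y p π true ≤ 0 := not_lt.mp fun hU =>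
    hlt.not_ge (hopt.selRate_le_of_unselPosMass_pos hp hg hlam hU)
  have hNB : selNegMass Y p π false ≤ 0 := not_lt.mp fun hN =>
    hlt.not_ge (hopt.selRate_le_of_selNegMass_pos hp hg hlam hN)
  linarith [selRate_eq_posRate_sub_add (Y := Y) (p := p) (π := π) true,
    selRate_eq_posRate_sub_add (Y := Y) (p := p) (π := π) false,
    selNegMass_nonneg hp hopt.1 true, unselPosMass_nonneg hp hopt.1 false]

lemma IsOptimal.unselPosMass_false_eq_zero (hp : IsPMF Y p)
    (hadv : posRate Y p false ≤ posRate Y p true) (hg : MonotoneOn g (Set.Ici 0))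
    (hlam : 0 ≤ lam) (hopt : IsOptimal Y p g lam π) : unselPosMass Y p π false = 0 := by
  by_contra hne
  have hUB := (unselPosMass_nonneg hp hopt.1 false).lt_of_ne' hne
  have hNB := (hopt.unselPosMass_eq_zero_or_selNegMass_eq_zero hp hg hlam false).resolve_left hne
  have hUA : unselPosMass Y p π true = 0 := by
    obtain ⟨c, hc⟩ := hopt.exists_unselPosMass_eq_zero hp hg hlam
    cases c
    exacts [absurd hc hne, hc]
  have hle : selRate Y p π true ≤ selRate Y p π false :=
    hopt.selRate_le_of_unselPosMass_pos hp hg hlam hUB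
  linarith [selRate_eq_posRate_sub_add (Y := Y) (p := p) (π := π) true,
    selRate_eq_posRate_sub_add (Y := Y) (p := p) (π := π) false,
    selNegMass_nonneg hp hopt.1 true]

lemma IsOptimal.selNegMass_true_eq_zero (hp : IsPMF Y p)
    (hadv : posRate Y p false ≤ posRate Y p true) (hg : MonotoneOn g (Set.Ici 0))
    (hlam : 0 ≤ lam) (hopt : IsOptimal Y p g lam π) : selNegMass Y p π true = 0 := by
  by_contra hne
  have hNA := (selNegMass_nonneg hp hopt.1 true).lt_of_ne' hne
  have hUA := (hopt.unselPosMass_eq_zero_or_selNegMass_eq_zero hp hg hlam true).resolve_right hne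
  have hNB : selNegMass Y p π false = 0 := by
    obtain ⟨c, hc⟩ := hopt.exists_selNegMass_eq_zero hp hg hlam
    cases c
    exacts [hc, absurd hc hne]
  have hle : selRate Y p π true ≤ selRate Y p π false :=
    hopt.selRate_le_of_selNegMass_pos hp hg hlam hNA
  linarith [selRate_eq_posRate_sub_add (Y := Y) (p := p) (π := π) true,
    selRate_eq_posRate_sub_add (Y := Y) (p := p) (π := π) false,
    unselPosMass_nonneg hp hopt.1 false]

end

/-- Unselected-mass comparison. If `Pr(Y>0|A) ≥ Pr(Y>0|B)` and `π`
is optimal, then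
`∑_{y} |p(y|A)(1−π(A,y)) − p(y|B)(1−π(B,y))| ≤ ∑_{y} |p(y|A) − p(y|B)|`. -/
theorem stmt_19 (Y : Finset ℝ) (p : Bool → ℝ → ℝ) (hp : IsPMF Y p)
    (hadv : posRate Y p false ≤ posRate Y p true)
    (g : ℝ → ℝ) (hg : AdmissiblePenalty g) (lam : ℝ) (hlam : 0 ≤ lam)
    (π : Bool → ℝ → ℝ) (hopt : IsOptimal Y p g lam π) :
    ∑ y ∈ Y, |pCond Y p true y * (1 - π true y) - pCond Y p false y * (1 - π false y)| ≤
      ∑ y ∈ Y, |pCond Y p true y - pCond Y p false y| := by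
  have hle := hopt.selRate_false_le_selRate_true hp hadv hg.2.1 hlam
  have hB := (unselPosMass_eq_zero_iff hp hopt.1 false).mp
    (hopt.unselPosMass_false_eq_zero hp hadv hg.2.1 hlam)
  have hA := (selNegMass_eq_zero_iff hp hopt.1 true).mp
    (hopt.selNegMass_true_eq_zero hp hadv hg.2.1 hlam)
  calc _ = ∑ y ∈ Y, |(pCond Y p true y - pCond Y p false y) -
        (pCond Y p true y * π true y - pCond Y p false y * π false y)| :=
        sum_congr rfl fun y _ => by ring_nf
    _ ≤ _ := sum_abs_sub_le_sum_abs (fun y hy => ?_) ?_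
  · by_cases hy0 : 0 < y
    · left
      linarith [hB y hy hy0, pCond_mul_one_sub_nonneg hp hopt.1 true hy]
    · right
      linarith [hA y hy hy0, pCond_mul_nonneg hp hopt.1 false hy]
  · rw [sum_sub_distrib]
    exact sub_nonneg.mpr hle
end
end
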